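/- arXiv:2105.11331 — 15 statements merged into one kernel-verified Lean document; each statement's English description precedes it below -/
import Mathlib

section
/- Distributivity Lemma: Let (X, 𝒜, 𝒩) be an MSN, let ℰ ⊆ 𝒜 be a collection admitting an 𝒩-essential supremum S ∈ 𝒜, and let C ∈ 𝒜. Then C ∩ S is an 𝒩-essential supremum of the collection {C ∩ E : E ∈ ℰ}. -/
open Set MeasureTheory ENNReal

namespace MSNPaper

variable {X Y : Type*}

/-- `A` is a σ-algebra of subsets of the carrier set `Z`. -/
def IsSigmaAlgebraOn (Z : Set X) (A : Set (Set X)) : Prop :=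
  (∀ s ∈ A, s ⊆ Z) ∧ ∅ ∈ A ∧ (∀ s ∈ A, Z \ s ∈ A) ∧
    ∀ f : ℕ → Set X, (∀ n, f n ∈ A) → (⋃ n, f n) ∈ A

/-- `N` is a σ-ideal of the σ-algebra `A`. -/
def IsSigmaIdeal (A N : Set (Set X)) : Prop :=
  N ⊆ A ∧ ∅ ∈ N ∧ (∀ s ∈ A, ∀ t ∈ N, s ⊆ t → s ∈ N) ∧
    ∀ f : ℕ → Set X, (∀ n, f n ∈ N) → (⋃ n, f n) ∈ N

/-- A measurable space with negligibles (MSN) on the carrier set `Z`. -/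
def IsMSN (Z : Set X) (A N : Set (Set X)) : Prop :=
  IsSigmaAlgebraOn Z A ∧ IsSigmaIdeal A N

/-- The MSN is saturated: every subset of a negligible set is negligible. -/
def Saturated (N : Set (Set X)) : Prop :=
  ∀ s t : Set X, s ⊆ t → t ∈ N → s ∈ N

/-- `U` is an `N`-essential upper bound of the collection `E`. -/
def IsEssUB (N E : Set (Set X)) (U : Set X) : Prop :=
  ∀ e ∈ E, e \ U ∈ N

/-- `S` is an `N`-essential supremum of the collection `E ⊆ A`. -/
def IsEssSup (A N E : Set (Set X)) (S : Set X) : Prop :=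
  S ∈ A ∧ IsEssUB N E S ∧ ∀ U ∈ A, IsEssUB N E U → S \ U ∈ N

/-- Every collection of measurable sets admits an essential supremum. -/
def Localizable (A N : Set (Set X)) : Prop :=
  ∀ E ⊆ A, ∃ S, IsEssSup A N E S

/-- The members of `E` pairwise intersect negligibly. -/
def AlmostDisjointed (N E : Set (Set X)) : Prop :=
  E.Pairwise fun e e' => e ∩ e' ∈ N

/-- Countable chain condition: almost disjointed families of non-negligible
measurable sets are countable. -/
def CCC (A N : Set (Set X)) : Prop :=
  ∀ E : Set (Set X), E ⊆ A → (∀ e ∈ E, e ∉ N) → AlmostDisjointed N E → E.Countable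

/-- Local determination for an MSN with carrier `Z`. -/
def LocallyDetermined (Z : Set X) (A N : Set (Set X)) : Prop :=
  ∀ E ⊆ A, IsEssSup A N E Z → ∀ s ⊆ Z, (∀ e ∈ E, s ∩ e ∈ A) → s ∈ A

/-- Trace of a collection of sets on a subset `Z`. -/
def Sub (A : Set (Set X)) (Z : Set X) : Set (Set X) := (· ∩ Z) '' A

lemma union_mem_aux {X : Type*} {A : Set (Set X)} (h : IsSigmaAlgebraOn Set.univ A)
    {s t : Set X} (hs : s ∈ A) (ht : t ∈ A) : s ∪ t ∈ A := by
  have := h.2.2.2 (fun n => if n = 0 then s else t) (by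
    intro n; by_cases hn : n = 0 <;> simp [hn, hs, ht])
  convert this using 1
  ext x
  simp only [mem_iUnion, mem_union]
  constructor
  · rintro (hx | hx)
    · exact ⟨0, by simp [hx]⟩
    · exact ⟨1, by simp [hx]⟩
  · rintro ⟨n, hn⟩
    by_cases h0 : n = 0 <;> simp [h0] at hn <;> tauto

lemma compl_mem_aux {X : Type*} {A : Set (Set X)} (h : IsSigmaAlgebraOn Set.univ A)
    {s : Set X} (hs : s ∈ A) : sᶜ ∈ A := by
  have := h.2.2.1 s hs
  simpa [compl_eq_univ_diff] using this

lemma inter_mem_aux {X : Type*} {A : Set (Set X)} (h : IsSigmaAlgebraOn Set.univ A)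
    {s t : Set X} (hs : s ∈ A) (ht : t ∈ A) : s ∩ t ∈ A := by
  have := compl_mem_aux h (union_mem_aux h (compl_mem_aux h hs) (compl_mem_aux h ht))
  simpa [compl_union] using this

lemma diff_mem_aux {X : Type*} {A : Set (Set X)} (h : IsSigmaAlgebraOn Set.univ A)
    {s t : Set X} (hs : s ∈ A) (ht : t ∈ A) : s \ t ∈ A := by
  rw [diff_eq]; exact inter_mem_aux h hs (compl_mem_aux h ht)

/-- Distributivity Lemma: if `S` is an `N`-essential supremum of `E ⊆ A` and `C ∈ A`,
then `C ∩ S` is an `N`-essential supremum of `{C ∩ e : e ∈ E}`. -/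
theorem distributivity_lemma {X : Type*} (A N : Set (Set X))
    (hMSN : IsMSN Set.univ A N)
    (E : Set (Set X)) (hE : E ⊆ A) (S : Set X) (hS : IsEssSup A N E S)
    (C : Set X) (hC : C ∈ A) :
    IsEssSup A N ((C ∩ ·) '' E) (C ∩ S) := by
  obtain ⟨hAlg, hId⟩ := hMSN
  obtain ⟨hSA, hSub, hSmin⟩ := hS
  refine ⟨inter_mem_aux hAlg hC hSA, ?_, ?_⟩
  · rintro _ ⟨e, he, rfl⟩
    refine hId.2.2.1 _ ?_ _ (hSub e he) ?_
    · exact diff_mem_aux hAlg (inter_mem_aux hAlg hC (hE he)) (inter_mem_aux hAlg hC hSA)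
    · intro x hx
      exact ⟨hx.1.2, fun h => hx.2 ⟨hx.1.1, h⟩⟩
  · intro U hU hUub
    have hCU : Cᶜ ∪ U ∈ A := union_mem_aux hAlg (compl_mem_aux hAlg hC) hU
    have hub : IsEssUB N E (Cᶜ ∪ U) := by
      intro e he
      have := hUub (C ∩ e) ⟨e, he, rfl⟩
      refine hId.2.2.1 _ (diff_mem_aux hAlg (hE he) hCU) _ this ?_
      intro x hx
      simp only [mem_diff, mem_union, mem_compl_iff, not_or, not_not] at hx ⊢
      exact ⟨⟨hx.2.1, hx.1⟩, hx.2.2⟩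
    have := hSmin _ hCU hub
    refine hId.2.2.1 _ (diff_mem_aux hAlg (inter_mem_aux hAlg hC hSA) hU) _ this ?_
    intro x hx
    simp only [mem_diff, mem_inter_iff, mem_union, mem_compl_iff, not_or, not_not] at hx ⊢
    exact ⟨hx.1.2, hx.1.1, hx.2⟩

end MSNPaper
end

section
/- Let ⟨(X_i, 𝒜_i, 𝒩_i)⟩_{i∈I} be a family of saturated localizable MSNs. Then their coproduct is localizable: every collection of measurable sets of the coproduct admits an essential supremum with respect to the coproduct σ-ideal. -/
open Set MeasureTheory ENNReal

namespace MSNPaper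

variable {X Y : Type*}

/-- The coproduct σ-algebra / σ-ideal on the disjoint union of a family of MSNs:
a set is measurable (negligible) iff its trace on each summand is. -/
def coProd {I : Type*} {Xf : I → Type*} (A : ∀ i, Set (Set (Xf i))) :
    Set (Set ((i : I) × Xf i)) :=
  {s | ∀ i, Sigma.mk i ⁻¹' s ∈ A i}

/-- A coproduct of saturated localizable MSNs is localizable. -/
theorem coproduct_localizable {I : Type*} {Xf : I → Type*}
    (A N : ∀ i, Set (Set (Xf i)))
    (hMSN : ∀ i, IsMSN Set.univ (A i) (N i))
    (hsat : ∀ i, Saturated (N i))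
    (hloc : ∀ i, Localizable (A i) (N i)) :
    Localizable (coProd A) (coProd N) := by
  intro E hE
  have hEi : ∀ i, (Sigma.mk i ⁻¹' ·) '' E ⊆ A i := by
    rintro i _ ⟨e, he, rfl⟩
    exact hE he i
  choose S hS using fun i => hloc i _ (hEi i)
  refine ⟨{p | p.2 ∈ S p.1}, fun i => ?_, ?_, ?_⟩
  · exact (hS i).1
  · intro e he i
    have : Sigma.mk i ⁻¹' (e \ {p | p.2 ∈ S p.1}) =
        (Sigma.mk i ⁻¹' e) \ S i := rfl
    rw [this]
    exact (hS i).2.1 _ ⟨e, he, rfl⟩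
  · intro U hU hUb i
    have hUbi : IsEssUB (N i) ((Sigma.mk i ⁻¹' ·) '' E) (Sigma.mk i ⁻¹' U) := by
      rintro _ ⟨e, he, rfl⟩
      exact hUb e he i
    have := (hS i).2.2 _ (hU i) hUbi
    exact this

end MSNPaper
end

section
/- Let (X, 𝒜, 𝒩) be a localizable MSN and ℰ ⊆ 𝒜 ∖ 𝒩 an almost disjointed family. Then the cardinality of the quotient of 𝒜 by the equivalence relation A ∼ B ⇔ A Δ B ∈ 𝒩 (symmetric difference) is at least 2^(card ℰ). -/
open Set MeasureTheory ENNReal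

namespace MSNPaper

variable {X Y : Type*}

/-!
For `F ⊆ E` let `S F` be an essential supremum of `F`. If `e ∈ F \ G`, then `e` is essentially
contained in `S F`, while `S G \ e` is still an essential upper bound of `G` (every member of `G`
meets `e` negligibly), so `e` meets `S G` negligibly. Hence `e` is essentially contained in
`S F \ S G`, and as `e` is not negligible, `S F` and `S G` differ by a non-negligible set. So
`F ↦ [S F]` is an injection of `𝒫 E` into the quotient.
-/

variable {A N G : Set (Set X)} {s t S : Set X}

abbrev IsSigmaAlgebraOn.toMeasurableSpace (hA : IsSigmaAlgebraOn univ A) : MeasurableSpace X where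
  MeasurableSet' := (· ∈ A)
  measurableSet_empty := hA.2.1
  measurableSet_compl s hs := by simpa [compl_eq_univ_sdiff] using hA.2.2.1 s hs
  measurableSet_iUnion := hA.2.2.2

lemma IsSigmaAlgebraOn.diff_mem (hA : IsSigmaAlgebraOn univ A) (hs : s ∈ A) (ht : t ∈ A) :
    s \ t ∈ A :=
  @MeasurableSet.diff X hA.toMeasurableSpace s t hs ht

lemma IsSigmaAlgebraOn.symmDiff_mem (hA : IsSigmaAlgebraOn univ A) (hs : s ∈ A) (ht : t ∈ A) :
    symmDiff s t ∈ A :=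
  @MeasurableSet.symmDiff X hA.toMeasurableSpace s t hs ht

lemma iUnion_nat_ite_zero (s t : Set X) : (⋃ n : ℕ, if n = 0 then s else t) = s ∪ t := by
  ext x
  simp only [mem_iUnion, mem_union]
  constructor
  · rintro ⟨n, hn⟩
    split_ifs at hn <;> simp [hn]
  · rintro (hx | hx)
    exacts [⟨0, by simpa⟩, ⟨1, by simpa⟩]

lemma IsSigmaIdeal.union_mem (hN : IsSigmaIdeal A N) (hs : s ∈ N) (ht : t ∈ N) : s ∪ t ∈ N := by
  simpa only [iUnion_nat_ite_zero] using
    hN.2.2.2 (fun n => if n = 0 then s else t) fun n => by split_ifs <;> assumption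

lemma IsSigmaIdeal.mem_of_subset (hN : IsSigmaIdeal A N) (hs : s ∈ A) (ht : t ∈ N)
    (hst : s ⊆ t) : s ∈ N :=
  hN.2.2.1 s hs t ht hst

lemma equivalence_symmDiff_mem (hMSN : IsMSN univ A N) :
    Equivalence fun a b : ↥A => symmDiff (a : Set X) (b : Set X) ∈ N := by
  obtain ⟨hA, hN⟩ := hMSN
  refine ⟨fun a => ?_, fun {a b} hab => ?_, fun {a b c} hab hbc => ?_⟩
  · simpa only [symmDiff_self, bot_eq_empty] using hN.2.1
  · rwa [symmDiff_comm]
  · exact hN.mem_of_subset (hA.symmDiff_mem a.2 c.2) (hN.union_mem hab hbc)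
      (symmDiff_triangle _ _ _)

lemma IsEssSup.inter_mem_of_forall_inter_mem (hMSN : IsMSN univ A N) (hS : IsEssSup A N G S)
    (hGA : G ⊆ A) (hs : s ∈ A) (hG : ∀ g ∈ G, g ∩ s ∈ N) : S ∩ s ∈ N := by
  obtain ⟨hA, hN⟩ := hMSN
  have hSs : S \ s ∈ A := hA.diff_mem hS.1 hs
  have hub : IsEssUB N G (S \ s) := fun g hg =>
    hN.mem_of_subset (hA.diff_mem (hGA hg) hSs) (hN.union_mem (hS.2.1 g hg) (hG g hg))
      fun x hx => by by_cases hxS : x ∈ S <;> simp_all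
  simpa only [sdiff_sdiff_right_self] using hS.2.2 _ hSs hub

lemma AlmostDisjointed.subset_of_symmDiff_mem (hMSN : IsMSN univ A N) {E F : Set (Set X)}
    (hE : AlmostDisjointed N E) (hEA : E ⊆ A) (hEN : ∀ e ∈ E, e ∉ N) (hFE : F ⊆ E) (hGE : G ⊆ E)
    {SF SG : Set X} (hSF : IsEssSup A N F SF) (hSG : IsEssSup A N G SG)
    (hFG : symmDiff SF SG ∈ N) : F ⊆ G := by
  intro e heF
  by_contra heG
  have he : e ∈ A := hEA (hFE heF)
  have hout : e \ SF ∈ N := hSF.2.1 e heF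
  have hin : SG ∩ e ∈ N := hSG.inter_mem_of_forall_inter_mem hMSN (hGE.trans hEA) he
    fun g hg => hE (hGE hg) (hFE heF) (ne_of_mem_of_not_mem hg heG)
  have hcover : e ⊆ (e \ SF) ∪ symmDiff SF SG ∪ (SG ∩ e) := fun x hx => by
    by_cases hxF : x ∈ SF <;> by_cases hxG : x ∈ SG <;> simp_all [Set.mem_symmDiff]
  have hN := hMSN.2
  exact hEN e (hFE heF) (hN.mem_of_subset he (hN.union_mem (hN.union_mem hout hFG) hin) hcover)

/-- In a localizable MSN, if `E ⊆ A ∖ N` is almost disjointed, then the quotient of `A`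
by equality modulo `N` (symmetric difference in `N`) has cardinality at least `2 ^ card E`. -/
theorem card_quot_ge {X : Type*} (A N : Set (Set X))
    (hMSN : IsMSN Set.univ A N) (hloc : Localizable A N)
    (E : Set (Set X)) (hEA : E ⊆ A) (hEN : ∀ e ∈ E, e ∉ N)
    (hdisj : AlmostDisjointed N E) :
    2 ^ Cardinal.mk ↥E ≤
      Cardinal.mk (Quot fun a b : ↥A => symmDiff (a : Set X) (b : Set X) ∈ N) := by
  have hsubE (F : Set ↥E) : Subtype.val '' F ⊆ E := Subtype.coe_image_subset E F
  choose S hS using fun F : Set ↥E => hloc _ ((hsubE F).trans hEA)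
  let r := fun a b : ↥A => symmDiff (a : Set X) (b : Set X) ∈ N
  have hinj : Function.Injective fun F : Set ↥E => Quot.mk r ⟨S F, (hS F).1⟩ := by
    intro F G hFG
    have h : symmDiff (S F) (S G) ∈ N :=
      (equivalence_symmDiff_mem hMSN).eqvGen_iff.1 (Quot.eqvGen_exact hFG)
    refine Subtype.val_injective.image_injective (subset_antisymm ?_ ?_)
    · exact hdisj.subset_of_symmDiff_mem hMSN hEA hEN (hsubE F) (hsubE G) (hS F) (hS G) h
    · exact hdisj.subset_of_symmDiff_mem hMSN hEA hEN (hsubE G) (hsubE F) (hS G) (hS F)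
        (symmDiff_comm (S F) (S G) ▸ h)
  calc 2 ^ Cardinal.mk ↥E = Cardinal.mk (Set ↥E) := Cardinal.mk_set.symm
    _ ≤ _ := Cardinal.mk_le_of_injective hinj

end MSNPaper
end

section
/- Let (X, 𝒜, 𝒩) be an MSN and 𝒞 ⊆ 𝒜 an 𝒩-generating collection. Then there exists ℰ ⊆ 𝒜 ∖ 𝒩 with the following properties: ℰ is almost disjointed; every E ∈ ℰ is contained in some C ∈ 𝒞; and ℰ is 𝒩-generating. -/
open Set MeasureTheory ENNReal

namespace MSNPaper

variable {X Y : Type*}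

/-- Every `N`-generating collection `C ⊆ A` admits an almost disjointed `N`-generating
refinement `E ⊆ A ∖ N` whose members are contained in members of `C`. -/
theorem exists_almostDisjointed_refinement {X : Type*} (A N : Set (Set X))
    (hMSN : IsMSN Set.univ A N)
    (C : Set (Set X)) (hCA : C ⊆ A) (hCgen : IsEssSup A N C Set.univ) :
    ∃ E : Set (Set X), E ⊆ A ∧ (∀ e ∈ E, e ∉ N) ∧ AlmostDisjointed N E ∧
      (∀ e ∈ E, ∃ c ∈ C, e ⊆ c) ∧ IsEssSup A N E Set.univ := by
  obtain ⟨⟨hAsub, hA0, hAc, hAU⟩, hNA, hN0, hNdown, hNU⟩ := hMSN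
  -- basic closure facts about A
  have hAcompl : ∀ s ∈ A, sᶜ ∈ A := by
    intro s hs
    have := hAc s hs
    simpa [Set.compl_eq_univ_diff] using this
  have hAunion : ∀ s ∈ A, ∀ t ∈ A, s ∪ t ∈ A := by
    intro s hs t ht
    have h := hAU (fun n => if n = 0 then s else t) (by intro n; split <;> assumption)
    have he : (⋃ n, (fun n => if n = 0 then s else t) n) = s ∪ t := by
      ext x
      simp only [Set.mem_iUnion, Set.mem_union]
      constructor
      · rintro ⟨n, hn⟩
        by_cases hn0 : n = 0
        · simp [hn0] at hn; exact Or.inl hn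
        · simp [hn0] at hn; exact Or.inr hn
      · rintro (h | h)
        · exact ⟨0, by simpa using h⟩
        · exact ⟨1, by simpa using h⟩
    rwa [he] at h
  have hAinter : ∀ s ∈ A, ∀ t ∈ A, s ∩ t ∈ A := by
    intro s hs t ht
    have : (sᶜ ∪ tᶜ)ᶜ ∈ A := hAcompl _ (hAunion _ (hAcompl s hs) _ (hAcompl t ht))
    simpa [Set.compl_union] using this
  have hAdiff : ∀ s ∈ A, ∀ t ∈ A, s \ t ∈ A := by
    intro s hs t ht
    rw [Set.diff_eq]
    exact hAinter _ hs _ (hAcompl t ht)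
  have hAuniv : (Set.univ : Set X) ∈ A := by
    simpa using hAc ∅ hA0
  -- the collection of candidate families
  set S : Set (Set (Set X)) :=
    {E | E ⊆ A ∧ (∀ e ∈ E, e ∉ N) ∧ AlmostDisjointed N E ∧ ∀ e ∈ E, ∃ c ∈ C, e ⊆ c} with hS
  obtain ⟨E, hES, hEmax⟩ : ∃ m, Maximal (· ∈ S) m := by
    apply zorn_subset
    intro c hcS hchain
    refine ⟨⋃₀ c, ⟨?_, ?_, ?_, ?_⟩, fun s hs => Set.subset_sUnion_of_mem hs⟩
    · intro e he
      obtain ⟨E, hEc, heE⟩ := he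
      obtain ⟨h1, h2, h3, h4⟩ := hcS hEc
      exact h1 heE
    · intro e he
      obtain ⟨E, hEc, heE⟩ := he
      obtain ⟨h1, h2, h3, h4⟩ := hcS hEc
      exact h2 e heE
    · intro e he e' he' hne
      obtain ⟨E1, hE1, he1⟩ := he
      obtain ⟨E2, hE2, he2⟩ := he'
      rcases hchain.total hE1 hE2 with h | h
      · obtain ⟨h1, h2, h3, h4⟩ := hcS hE2
        exact h3 (h he1) he2 hne
      · obtain ⟨h1, h2, h3, h4⟩ := hcS hE1
        exact h3 he1 (h he2) hne
    · intro e he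
      obtain ⟨E, hEc, heE⟩ := he
      obtain ⟨h1, h2, h3, h4⟩ := hcS hEc
      exact h4 e heE
  obtain ⟨hEA, hEnN, hEad, hEref⟩ := hES
  refine ⟨E, hEA, hEnN, hEad, hEref, hAuniv, fun e _ => by simpa using hN0, ?_⟩
  -- E is generating
  intro U hU hUB
  by_contra hbad
  have hnotub : ¬ IsEssUB N C U := fun hub => hbad (hCgen.2.2 U hU hub)
  rw [IsEssUB] at hnotub
  push_neg at hnotub
  obtain ⟨c, hcC, hcU⟩ := hnotub
  set e := c \ U with he
  have heA : e ∈ A := hAdiff c (hCA hcC) U hU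
  have heN : e ∉ N := hcU
  have heE : e ∉ E := by
    intro hmem
    have := hUB e hmem
    rw [he, Set.diff_diff, Set.union_self, ← he] at this
    exact heN this
  have hins : insert e E ∈ S := by
    refine ⟨?_, ?_, ?_, ?_⟩
    · intro x hx
      rcases hx with rfl | hx
      · exact heA
      · exact hEA hx
    · intro x hx
      rcases hx with rfl | hx
      · exact heN
      · exact hEnN x hx
    · rw [AlmostDisjointed, Set.pairwise_insert]
      refine ⟨hEad, ?_⟩
      intro e' he' _
      have h1 : e ∩ e' ∈ N := by
        refine hNdown _ (hAinter _ heA _ (hEA he')) _ (hUB e' he') ?_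
        intro x hx
        exact ⟨hx.2, hx.1.2⟩
      have h2 : e' ∩ e ∈ N := by
        refine hNdown _ (hAinter _ (hEA he') _ heA) _ (hUB e' he') ?_
        intro x hx
        exact ⟨hx.1, hx.2.2⟩
      exact ⟨h1, h2⟩
    · intro x hx
      rcases hx with rfl | hx
      · exact ⟨c, hcC, Set.diff_subset⟩
      · exact hEref x hx
  have := hEmax hins (Set.subset_insert e E)
  exact heE (this (Set.mem_insert e E))


end MSNPaper
end

section
/- Assume the Continuum Hypothesis (ℵ₁ = 𝔠). Let X be a Polish space endowed with its Borel σ-algebra 𝔅(X) and let μ be a semi-finite Borel measure on X. Then either μ is σ-finite, or the MSN (X, 𝔅(X), 𝒩_μ) is not localizable. -/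
open Set MeasureTheory ENNReal

namespace MSNPaper

variable {X Y : Type*}

theorem chAux.{v, u} (CH : Cardinal.aleph.{v} 1 = Cardinal.continuum.{v}) :
    Cardinal.aleph.{u} 1 = Cardinal.continuum.{u} := by
  have h := congrArg Cardinal.lift.{u} CH
  rw [Cardinal.lift_aleph, Cardinal.lift_continuum, Ordinal.lift_one] at h
  have h1 : Cardinal.lift.{v} (Cardinal.aleph.{u} 1)
      = Cardinal.lift.{v} (Cardinal.continuum.{u}) := by
    rw [Cardinal.lift_aleph, Cardinal.lift_continuum, Ordinal.lift_one]
    exact h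
  exact Cardinal.lift_inj.1 h1

/-- Under the Continuum Hypothesis, a semi-finite Borel measure on a Polish space is
either σ-finite or gives rise to a non-localizable MSN. -/
theorem polish_dichotomy {X : Type*} [TopologicalSpace X] [PolishSpace X]
    [MeasurableSpace X] [BorelSpace X] (μ : Measure X)
    (hsemifinite : ∀ s : Set X, MeasurableSet s → μ s = ⊤ →
      ∃ t, t ⊆ s ∧ MeasurableSet t ∧ 0 < μ t ∧ μ t < ⊤)
    (CH : Cardinal.aleph 1 = Cardinal.continuum) :
    SigmaFinite μ ∨
      ¬ Localizable {s : Set X | MeasurableSet s} {s : Set X | MeasurableSet s ∧ μ s = 0} := by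
  by_cases hsf : SigmaFinite μ
  · exact Or.inl hsf
  right
  intro hloc
  -- a maximal pairwise disjoint family of sets of positive finite measure
  set 𝒮 : Set (Set (Set X)) :=
    {D | (∀ s ∈ D, MeasurableSet s ∧ 0 < μ s ∧ μ s < ⊤) ∧ D.PairwiseDisjoint id} with h𝒮
  obtain ⟨D, hDmem, hDmax⟩ : ∃ D, Maximal (· ∈ 𝒮) D := by
    apply zorn_subset
    intro c hc hchain
    refine ⟨⋃₀ c, ⟨?_, ?_⟩, fun s hs => subset_sUnion_of_mem hs⟩
    · rintro s ⟨d, hd, hs⟩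
      exact (hc hd).1 s hs
    · rintro s ⟨d₁, hd₁, hs⟩ t ⟨d₂, hd₂, ht⟩ hst
      rcases hchain.total hd₁ hd₂ with h | h
      · exact (hc hd₂).2 (h hs) ht hst
      · exact (hc hd₁).2 hs (h ht) hst
  have hDprop := hDmem.1
  have hDdisj := hDmem.2
  by_cases hcnt : D.Countable
  · -- then μ is σ-finite, contradiction
    have hRm : MeasurableSet (⋃₀ D)ᶜ :=
      (MeasurableSet.sUnion hcnt fun s hs => (hDprop s hs).1).compl
    have hR0 : μ (⋃₀ D)ᶜ = 0 := by
      by_contra hR0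
      obtain ⟨t, hts, htm, htp, htf⟩ :
          ∃ t, t ⊆ (⋃₀ D)ᶜ ∧ MeasurableSet t ∧ 0 < μ t ∧ μ t < ⊤ := by
        by_cases hinf : μ (⋃₀ D)ᶜ = ⊤
        · obtain ⟨t, h1, h2, h3, h4⟩ := hsemifinite _ hRm hinf
          exact ⟨t, h1, h2, h3, h4⟩
        · exact ⟨(⋃₀ D)ᶜ, subset_rfl, hRm, pos_iff_ne_zero.2 hR0, lt_top_iff_ne_top.2 hinf⟩
      have htD : insert t D ∈ 𝒮 := by
        constructor
        · rintro s (rfl | hs)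
          · exact ⟨htm, htp, htf⟩
          · exact hDprop s hs
        · refine hDdisj.insert fun d hd _ => ?_
          rw [Set.disjoint_left]
          intro x hx hxd
          exact hts hx (mem_sUnion.2 ⟨d, hd, hxd⟩)
      have : t ∈ D := hDmax htD (subset_insert _ _) (mem_insert _ _)
      obtain ⟨x, hx⟩ := nonempty_of_measure_ne_zero htp.ne'
      exact hts hx (mem_sUnion.2 ⟨t, this, hx⟩)
    -- build a σ-finite structure
    obtain ⟨f, hf⟩ := (hcnt.insert ∅).exists_eq_range (insert_nonempty _ _)
    refine hsf ⟨⟨⟨fun n => f n ∪ (⋃₀ D)ᶜ, fun _ => trivial, ?_, ?_⟩⟩⟩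
    · intro n
      have hfn : f n ∈ insert ∅ D := hf ▸ mem_range_self n
      have hfin : μ (f n) < ⊤ := by
        rcases hfn with h | h
        · simp [h]
        · exact (hDprop _ h).2.2
      calc μ (f n ∪ (⋃₀ D)ᶜ) ≤ μ (f n) + μ (⋃₀ D)ᶜ := measure_union_le _ _
        _ = μ (f n) := by rw [hR0, add_zero]
        _ < ⊤ := hfin
    · apply Set.eq_univ_of_forall
      intro x
      by_cases hx : x ∈ ⋃₀ D
      · obtain ⟨d, hd, hxd⟩ := hx
        have : d ∈ range f := by rw [← hf]; exact mem_insert_of_mem _ hd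
        obtain ⟨n, rfl⟩ := this
        exact mem_iUnion.2 ⟨n, Or.inl hxd⟩
      · exact mem_iUnion.2 ⟨0, Or.inr hx⟩
  · -- D uncountable: use localizability + CH to get a contradiction
    have hsub : ∀ S : Set ↥D, ((↑) '' S : Set (Set X)) ⊆ {s : Set X | MeasurableSet s} := by
      rintro S e ⟨d, _, rfl⟩
      exact (hDprop d d.2).1
    have hg := fun S : Set ↥D => (hloc _ (hsub S)).choose_spec
    set g : Set ↥D → Set X := fun S => (hloc _ (hsub S)).choose with hgdef
    -- key injectivity claim
    have key : ∀ S T : Set ↥D, ∀ d : ↥D, d ∈ S → d ∉ T → g S ≠ g T := by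
      intro S T d hdS hdT heq
      obtain ⟨hmS, hubS, hminS⟩ := hg S
      obtain ⟨hmT, hubT, hminT⟩ := hg T
      have h1 : μ ((d : Set X) \ g S) = 0 := (hubS _ ⟨d, hdS, rfl⟩).2
      have h2 : μ (g T \ (d : Set X)ᶜ) = 0 := by
        refine (hminT ((d : Set X)ᶜ) (hDprop _ d.2).1.compl ?_).2
        rintro e ⟨d', hd'T, rfl⟩
        have hne : (d' : Set X) ≠ (d : Set X) := by
          intro h
          exact hdT (Subtype.coe_injective h ▸ hd'T)
        have hdisj : Disjoint (d' : Set X) (d : Set X) := hDdisj d'.2 d.2 hne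
        have : (d' : Set X) \ (d : Set X)ᶜ = ∅ := by
          rw [diff_compl, Set.disjoint_iff_inter_eq_empty.1 hdisj]
        rw [this]
        exact ⟨MeasurableSet.empty, measure_empty⟩
      have h2' : μ ((d : Set X) ∩ g T) = 0 := by
        rw [diff_compl, inter_comm] at h2
        exact h2
      have hle : μ (d : Set X) ≤ μ ((d : Set X) \ g S) + μ ((d : Set X) ∩ g S) := by
        have := measure_union_le (μ := μ) ((d : Set X) \ g S) ((d : Set X) ∩ g S)
        rwa [Set.diff_union_inter] at this
      rw [h1, heq, h2', add_zero] at hle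
      exact ((hDprop _ d.2).2.1.trans_le hle).false
    have hinj : Function.Injective fun S : Set ↥D => (⟨g S, (hg S).1⟩ : {t : Set X // MeasurableSet t}) := by
      intro S T h
      have h' : g S = g T := congrArg Subtype.val h
      by_contra hne
      rcases Set.not_subset.1 (fun hsub' => hne (Set.Subset.antisymm hsub'
        (fun d hd => by_contra fun hdS => key T S d hd hdS h'.symm))) with ⟨d, hdS, hdT⟩
      exact key S T d hdS hdT h'
    -- cardinality bound on Borel sets
    have hb : (‹MeasurableSpace X› : MeasurableSpace X)
        = MeasurableSpace.generateFrom (TopologicalSpace.countableBasis X) := by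
      rw [BorelSpace.measurable_eq (α := X),
        (TopologicalSpace.isBasis_countableBasis X).borel_eq_generateFrom]
    have hBcard : (Cardinal.mk {t : Set X | MeasurableSet t}) ≤ Cardinal.continuum := by
      have hB : (Cardinal.mk (TopologicalSpace.countableBasis X)) ≤ Cardinal.continuum :=
        ((Cardinal.mk_le_aleph0_iff.2 (TopologicalSpace.countable_countableBasis X).to_subtype).trans
          Cardinal.aleph0_le_continuum)
      rw [hb]
      exact MeasurableSpace.cardinal_measurableSet_le_continuum hB
    have hDcard : Cardinal.aleph 1 ≤ Cardinal.mk ↥D := by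
      by_contra h
      exact hcnt ((Cardinal.countable_iff_lt_aleph_one D).2 (not_le.1 h))
    have hpow : (2 : Cardinal) ^ Cardinal.aleph 1 ≤ Cardinal.aleph 1 := by
      calc (2 : Cardinal) ^ Cardinal.aleph 1 ≤ (2 : Cardinal) ^ Cardinal.mk ↥D :=
            Cardinal.power_le_power_left two_ne_zero hDcard
        _ = Cardinal.mk (Set ↥D) := Cardinal.mk_set.symm
        _ ≤ Cardinal.mk {t : Set X // MeasurableSet t} := Cardinal.mk_le_of_injective hinj
        _ ≤ Cardinal.continuum := hBcard
        _ = Cardinal.aleph 1 := (chAux CH).symm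
    exact (Cardinal.cantor (Cardinal.aleph 1)).not_ge hpow

end MSNPaper
end

section
/- Let X be a set of cardinality ℵ₁ and let 𝒦(X) be the σ-ideal of countable subsets of X. Then the MSN (X, 𝒫(X), 𝒦(X)) is not localizable: there exists a collection ℰ ⊆ 𝒫(X) that admits no 𝒦(X)-essential supremum. -/
open Set MeasureTheory ENNReal

namespace MSNPaper

variable {X Y : Type*}

/-- On a set of cardinality ℵ₁, the MSN of all subsets with the σ-ideal of countable
sets is not localizable. -/
theorem countable_ideal_not_localizable {X : Type*}
    (hX : Cardinal.mk X = Cardinal.aleph 1) :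
    ¬ Localizable (Set.univ : Set (Set X)) {s : Set X | s.Countable} := by
  intro hloc
  -- X is uncountable
  have hXunc : ¬ Countable X := by
    rw [← Cardinal.mk_le_aleph0_iff, hX]
    exact not_le.mpr Cardinal.aleph0_lt_aleph_one
  -- a bijection X ≃ X × X
  have hcard : Cardinal.mk (X × X) = Cardinal.mk X := by
    have h0 : Cardinal.aleph0 ≤ Cardinal.mk X := by
      rw [hX]; exact Cardinal.aleph0_lt_aleph_one.le
    simpa using Cardinal.mul_eq_self h0
  obtain ⟨e⟩ := Cardinal.eq.mp hcard.symm
  -- the columns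
  set E : X → Set X := fun a => {x | (e x).1 = a} with hE
  have hEunc : ∀ a, ¬ (E a).Countable := by
    intro a hc
    apply hXunc
    have hg : Function.Injective (fun b : X => e.symm (a, b)) := by
      intro b b' hb
      have := e.symm.injective hb
      simpa using this
    have hsub : (Set.univ : Set X) ⊆ (fun b : X => e.symm (a, b)) ⁻¹' (E a) := by
      intro b _
      simp [hE]
    have := (hc.preimage hg).mono hsub
    exact Set.countable_univ_iff.mp this
  -- disjointness of columns
  have hdisj : ∀ a b x, x ∈ E a → x ∈ E b → a = b := by
    intro a b x ha hb
    simp only [hE, Set.mem_setOf_eq] at ha hb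
    rw [← ha, ← hb]
  obtain ⟨S, _, hSub, hSmin⟩ := hloc (Set.range E) (fun _ _ => trivial)
  -- pick a point of S in each column
  have hpick : ∀ a, ∃ x, x ∈ E a ∧ x ∈ S := by
    intro a
    by_contra h
    push_neg at h
    have hEs : E a \ S = E a := by
      ext x; constructor
      · exact fun hx => hx.1
      · exact fun hx => ⟨hx, fun hxS => h x hx hxS⟩
    have := hSub (E a) ⟨a, rfl⟩
    rw [hEs] at this
    exact hEunc a this
  choose c hc1 hc2 using hpick
  have hcinj : Function.Injective c := fun a b h => hdisj a b (c b) (h ▸ hc1 a) (hc1 b)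
  -- the smaller essential upper bound
  have hUub : IsEssUB {s : Set X | s.Countable} (Set.range E) (S \ Set.range c) := by
    rintro _ ⟨a, rfl⟩
    have hsub : E a \ (S \ Set.range c) ⊆ (E a \ S) ∪ {c a} := by
      intro x hx
      obtain ⟨hxa, hxU⟩ := hx
      by_cases hxS : x ∈ S
      · right
        have hxr : x ∈ Set.range c := by
          by_contra hr
          exact hxU ⟨hxS, hr⟩
        obtain ⟨b, rfl⟩ := hxr
        have : b = a := hdisj b a (c b) (hc1 b) hxa
        simp [this]
      · exact Or.inl ⟨hxa, hxS⟩
    exact ((hSub (E a) ⟨a, rfl⟩).union (Set.countable_singleton _)).mono hsub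
  have hSdiff := hSmin (S \ Set.range c) trivial hUub
  -- S \ (S \ range c) = range c, which is uncountable
  have hrange : Set.range c ⊆ S \ (S \ Set.range c) := by
    rintro x ⟨a, rfl⟩
    exact ⟨hc2 a, fun h => h.2 ⟨a, rfl⟩⟩
  have hrc : (Set.range c).Countable := hSdiff.mono hrange
  apply hXunc
  have : (c ⁻¹' Set.range c).Countable := hrc.preimage hcinj
  have huniv : (Set.univ : Set X).Countable := Set.Countable.mono (fun x _ => (Set.mem_range_self x : c x ∈ Set.range c)) this
  exact Set.countable_univ_iff.mp huniv

end MSNPaper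
end

section
/- Every saturated ccc MSN (X, 𝒜, 𝒩) is locally determined: for every 𝒩-generating collection ℰ ⊆ 𝒜 and every A ⊆ X such that A ∩ E ∈ 𝒜 for every E ∈ ℰ, one has A ∈ 𝒜. -/
open Set MeasureTheory ENNReal

namespace MSNPaper

variable {X Y : Type*}

section Aux

variable {A N : Set (Set X)}

lemma aux_compl_mem (hA : IsSigmaAlgebraOn (Set.univ : Set X) A)
    {s : Set X} (hs : s ∈ A) : sᶜ ∈ A := by
  have := hA.2.2.1 s hs
  rwa [← Set.compl_eq_univ_diff] at this

lemma aux_union_mem (hA : IsSigmaAlgebraOn (Set.univ : Set X) A)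
    {s t : Set X} (hs : s ∈ A) (ht : t ∈ A) : s ∪ t ∈ A := by
  have h := hA.2.2.2 (fun n => if n = 0 then s else t) (by
    intro n; by_cases h : n = 0 <;> simp [h, hs, ht])
  have : (⋃ n, if n = 0 then s else t) = s ∪ t := by
    ext x
    simp only [Set.mem_iUnion, Set.mem_union]
    constructor
    · rintro ⟨n, hn⟩
      by_cases h : n = 0
      · left; simpa [h] using hn
      · right; simpa [h] using hn
    · rintro (h | h)
      · exact ⟨0, by simpa using h⟩
      · exact ⟨1, by simpa using h⟩
  rwa [this] at h

lemma aux_inter_mem (hA : IsSigmaAlgebraOn (Set.univ : Set X) A)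
    {s t : Set X} (hs : s ∈ A) (ht : t ∈ A) : s ∩ t ∈ A := by
  have : s ∩ t = (sᶜ ∪ tᶜ)ᶜ := by rw [Set.compl_union, compl_compl, compl_compl]
  rw [this]
  exact aux_compl_mem hA (aux_union_mem hA (aux_compl_mem hA hs) (aux_compl_mem hA ht))

lemma aux_diff_mem (hA : IsSigmaAlgebraOn (Set.univ : Set X) A)
    {s t : Set X} (hs : s ∈ A) (ht : t ∈ A) : s \ t ∈ A := by
  rw [Set.diff_eq]
  exact aux_inter_mem hA hs (aux_compl_mem hA ht)

lemma aux_sUnion_mem (hA : IsSigmaAlgebraOn (Set.univ : Set X) A)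
    {D : Set (Set X)} (hD : D ⊆ A) (hDc : D.Countable) : ⋃₀ D ∈ A := by
  rcases D.eq_empty_or_nonempty with h | h
  · simpa [h] using hA.2.1
  · obtain ⟨f, hf⟩ := hDc.exists_eq_range h
    have : ⋃₀ D = ⋃ n, f n := by rw [hf, Set.sUnion_range]
    rw [this]
    exact hA.2.2.2 f (fun n => hD (by rw [hf]; exact Set.mem_range_self n))

end Aux

/-- A saturated ccc MSN is locally determined. -/
theorem ccc_locallyDetermined {X : Type*} (A N : Set (Set X))
    (hMSN : IsMSN Set.univ A N) (hsat : Saturated N) (hccc : CCC A N) :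
    LocallyDetermined Set.univ A N := by
  obtain ⟨hA, hN⟩ := hMSN
  intro E hE hEss s _ hsE
  -- Maximal almost disjointed family of non-negligible measurable sets each under some e ∈ E
  set G : Set (Set X) := {d | d ∈ A ∧ d ∉ N ∧ ∃ e ∈ E, d ⊆ e} with hG
  set P : Set (Set (Set X)) := {F | F ⊆ G ∧ AlmostDisjointed N F} with hP
  obtain ⟨D, hDmax⟩ : ∃ D, Maximal (· ∈ P) D := by
    apply zorn_subset
    intro c hc hchain
    refine ⟨⋃₀ c, ⟨?_, ?_⟩, fun F hF => Set.subset_sUnion_of_mem hF⟩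
    · intro d hd
      obtain ⟨F, hFc, hdF⟩ := hd
      exact (hc hFc).1 hdF
    · intro x hx y hy hxy
      obtain ⟨F1, hF1, hx1⟩ := hx
      obtain ⟨F2, hF2, hy2⟩ := hy
      rcases hchain.total hF1 hF2 with h | h
      · exact (hc hF2).2 (h hx1) hy2 hxy
      · exact (hc hF1).2 hx1 (h hy2) hxy
  have hDP : D ∈ P := hDmax.1
  have hDG : D ⊆ G := hDP.1
  have hDc : D.Countable :=
    hccc D (fun d hd => (hDG hd).1) (fun d hd => (hDG hd).2.1) hDP.2
  set S : Set X := ⋃₀ D with hS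
  have hSA : S ∈ A := aux_sUnion_mem hA (fun d hd => (hDG hd).1) hDc
  -- S is an essential upper bound of E
  have hSub : IsEssUB N E S := by
    intro e he
    by_contra hne
    have heS : e \ S ∈ A := aux_diff_mem hA (hE he) hSA
    have hins : insert (e \ S) D ∈ P := by
      constructor
      · intro d hd
        rcases hd with rfl | hd
        · exact ⟨heS, hne, e, he, Set.diff_subset⟩
        · exact hDG hd
      · intro x hx y hy hxy
        have key : ∀ d ∈ D, (e \ S) ∩ d ∈ N := by
          intro d hd
          have : (e \ S) ∩ d = ∅ := by
            apply Set.eq_empty_of_subset_empty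
            intro x ⟨hx1, hx2⟩
            exact hx1.2 ⟨d, hd, hx2⟩
          rw [this]; exact hN.2.1
        rcases hx with rfl | hx
        · rcases hy with rfl | hy
          · exact absurd rfl hxy
          · exact key y hy
        · rcases hy with rfl | hy
          · rw [Set.inter_comm]; exact key x hx
          · exact hDP.2 hx hy hxy
    have : e \ S ∈ D := hDmax.2 hins (Set.subset_insert _ _) (Set.mem_insert _ _)
    have hsub : e \ S ⊆ S := Set.subset_sUnion_of_mem this
    have : e \ S = ∅ := by
      apply Set.eq_empty_of_subset_empty
      intro x hx
      exact hx.2 (hsub hx)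
    exact hne (this ▸ hN.2.1)
  -- univ \ S is negligible
  have hcoN : Set.univ \ S ∈ N := hEss.2.2 S hSA hSub
  -- s \ S is negligible, hence measurable
  have hsS : s \ S ∈ N := hsat _ _ (Set.diff_subset_diff_left (Set.subset_univ s)) hcoN
  -- s ∩ S is measurable
  have hsint : s ∩ S ∈ A := by
    have heq : s ∩ S = ⋃₀ ((fun d => s ∩ d) '' D) := by
      ext x
      simp only [hS, Set.mem_inter_iff, Set.mem_sUnion, Set.mem_image]
      constructor
      · rintro ⟨hxs, d, hd, hxd⟩
        exact ⟨s ∩ d, ⟨d, hd, rfl⟩, hxs, hxd⟩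
      · rintro ⟨_, ⟨d, hd, rfl⟩, hxs, hxd⟩
        exact ⟨hxs, d, hd, hxd⟩
    rw [heq]
    apply aux_sUnion_mem hA
    · rintro _ ⟨d, hd, rfl⟩
      obtain ⟨hdA, _, e, he, hde⟩ := hDG hd
      have : s ∩ d = (s ∩ e) ∩ d := by
        ext x; constructor
        · rintro ⟨h1, h2⟩; exact ⟨⟨h1, hde h2⟩, h2⟩
        · rintro ⟨⟨h1, _⟩, h2⟩; exact ⟨h1, h2⟩
      show s ∩ d ∈ A
      rw [this]
      exact aux_inter_mem hA (hsE e he) hdA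
    · exact hDc.image _
  have : s = (s ∩ S) ∪ (s \ S) := by
    ext x; simp only [Set.mem_union, Set.mem_inter_iff, Set.mem_diff]; tauto
  rw [this]
  exact aux_union_mem hA hsint (hN.1 hsS)

end MSNPaper
end

section
/- Let (X, 𝒜, μ) be a complete semi-finite measure space. Then the following are equivalent: (a) for every A ⊆ X, if A ∩ F ∈ 𝒜 for every F ∈ 𝒜 with μ(F) < ∞, then A ∈ 𝒜; (b) the MSN (X, 𝒜, 𝒩_μ) is locally determined, i.e. for every 𝒩_μ-generating collection ℰ ⊆ 𝒜 and every A ⊆ X, if A ∩ E ∈ 𝒜 for every E ∈ ℰ then A ∈ 𝒜. -/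
open Set MeasureTheory ENNReal

namespace MSNPaper

variable {X Y : Type*}

/-! A set of finite measure `F` only sees countably many members of a generating family `E`:
maximising `μ (F ∩ ⋃₀ T)` over countable `T ⊆ E` yields a countable `T` with `F \ ⋃₀ T` null,
because `Fᶜ ∪ ⋃₀ T` is then an essential upper bound of `E`. On `⋃₀ T` a set `s` is measurable
as a countable union of the sets `s ∩ e`, and on the null set `F \ ⋃₀ T` by completeness.
Conversely, semi-finiteness says exactly that the sets of finite measure form a generating family. -/

theorem exists_countable_subset_measure_diff_sUnion_eq_zero [MeasurableSpace X] (ν : Measure X)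
    [IsFiniteMeasure ν] {E : Set (Set X)} (hE : ∀ e ∈ E, MeasurableSet e) :
    ∃ T ⊆ E, T.Countable ∧ ∀ e ∈ E, ν (e \ ⋃₀ T) = 0 := by
  set S := (fun T => ν (⋃₀ T)) '' {T | T ⊆ E ∧ T.Countable}
  have hS : S.Nonempty := ⟨_, mem_image_of_mem _ ⟨empty_subset E, countable_empty⟩⟩
  obtain ⟨u, -, hu, huS⟩ := exists_seq_tendsto_sSup hS (OrderTop.bddAbove S)
  choose T hT hTu using huS
  set T₀ := ⋃ n, T n
  have hT₀E : T₀ ⊆ E := iUnion_subset fun n => (hT n).1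
  have hT₀ : T₀.Countable := countable_iUnion fun n => (hT n).2
  refine ⟨T₀, hT₀E, hT₀, fun e he => ?_⟩
  have hmax : ∀ T' ⊆ E, T'.Countable → ν (⋃₀ T') ≤ ν (⋃₀ T₀) := fun T' hT'E hT' =>
    calc ν (⋃₀ T') ≤ sSup S := le_sSup ⟨T', ⟨hT'E, hT'⟩, rfl⟩
      _ ≤ ν (⋃₀ T₀) := le_of_tendsto' hu fun n =>
        hTu n ▸ measure_mono (sUnion_mono (subset_iUnion T n))
  have hU : MeasurableSet (⋃₀ T₀) := .sUnion hT₀ fun t ht => hE t (hT₀E ht)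
  have hins := hmax (insert e T₀) (insert_subset he hT₀E) (hT₀.insert e)
  rw [sUnion_insert, ← measure_inter_add_sdiff _ hU, union_inter_cancel_right,
    union_sdiff_right] at hins
  exact nonpos_iff_eq_zero.1 <|
    ENNReal.le_of_add_le_add_left (measure_ne_top ν _) (by rwa [add_zero])

theorem exists_countable_subset_measure_diff_sUnion_eq_zero_of_isEssSup [MeasurableSpace X]
    {μ : Measure X} {E : Set (Set X)} (hE : E ⊆ {s | MeasurableSet s})
    (hgen : IsEssSup {s | MeasurableSet s} {s | MeasurableSet s ∧ μ s = 0} E univ)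
    {F : Set X} (hF : MeasurableSet F) (hFfin : μ F ≠ ∞) :
    ∃ T ⊆ E, T.Countable ∧ μ (F \ ⋃₀ T) = 0 := by
  have : IsFiniteMeasure (μ.restrict F) := isFiniteMeasure_restrict.2 hFfin
  obtain ⟨T, hTE, hT, hnull⟩ :=
    exists_countable_subset_measure_diff_sUnion_eq_zero (μ.restrict F) hE
  refine ⟨T, hTE, hT, ?_⟩
  have hT_meas : MeasurableSet (⋃₀ T) := .sUnion hT fun t ht => hE (hTE ht)
  have hUB : IsEssUB {s | MeasurableSet s ∧ μ s = 0} E (Fᶜ ∪ ⋃₀ T) := fun e he => by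
    have heq : e \ (Fᶜ ∪ ⋃₀ T) = (e \ ⋃₀ T) ∩ F := by
      ext; simp only [mem_sdiff, mem_union, mem_compl_iff, mem_inter_iff]; tauto
    rw [heq]
    refine ⟨((hE he).diff hT_meas).inter hF, ?_⟩
    rw [← Measure.restrict_apply' hF]
    exact hnull e he
  have hsup := (hgen.2.2 _ (hF.compl.union hT_meas) hUB).2
  rwa [show univ \ (Fᶜ ∪ ⋃₀ T) = F \ ⋃₀ T by ext; simp] at hsup

theorem measurableSet_inter_of_measure_diff_eq_zero [MeasurableSpace X] {μ : Measure X}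
    (hcomplete : ∀ s t : Set X, s ⊆ t → MeasurableSet t → μ t = 0 → MeasurableSet s)
    {s F G : Set X} (hF : MeasurableSet F) (hG : MeasurableSet G) (hsG : MeasurableSet (s ∩ G))
    (hnull : μ (F \ G) = 0) : MeasurableSet (s ∩ F) := by
  rw [← inter_union_sdiff (s ∩ F) G, inter_right_comm]
  exact (hsG.inter hF).union
    (hcomplete _ _ (sdiff_subset_sdiff_left inter_subset_right) (hF.diff hG) hnull)

theorem isEssSup_univ_setOf_measure_lt_top [MeasurableSpace X] {μ : Measure X}
    (hsemifinite : ∀ s : Set X, MeasurableSet s → μ s = ⊤ →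
      ∃ t, t ⊆ s ∧ MeasurableSet t ∧ 0 < μ t ∧ μ t < ⊤) :
    IsEssSup {s | MeasurableSet s} {s | MeasurableSet s ∧ μ s = 0}
      {F | MeasurableSet F ∧ μ F < ⊤} univ := by
  refine ⟨MeasurableSet.univ, fun e _ => by simp, fun U hU hUB => ?_⟩
  rw [← compl_eq_univ_sdiff]
  refine ⟨hU.compl, ?_⟩
  by_contra hpos
  obtain ⟨t, htU, ht, htpos, htfin⟩ : ∃ t ⊆ Uᶜ, MeasurableSet t ∧ 0 < μ t ∧ μ t < ⊤ := by
    rcases eq_or_ne (μ Uᶜ) ⊤ with htop | hfin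
    · exact hsemifinite _ hU.compl htop
    · exact ⟨Uᶜ, subset_rfl, hU.compl, pos_iff_ne_zero.2 hpos, lt_top_iff_ne_top.2 hfin⟩
  have htU_null : μ (t \ U) = 0 := (hUB t ⟨ht, htfin⟩).2
  have ht_sub : t ⊆ t \ U := fun x hx => ⟨hx, htU hx⟩
  exact htpos.ne' (measure_mono_null ht_sub htU_null)

/-- For a complete semi-finite measure space, local determination in the sense of
measure spaces (testing with sets of finite measure) is equivalent to local
determination of the associated MSN (testing with arbitrary generating collections). -/
theorem locallyDetermined_iff {X : Type*} [MeasurableSpace X] (μ : Measure X)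
    (hcomplete : ∀ s t : Set X, s ⊆ t → MeasurableSet t → μ t = 0 → MeasurableSet s)
    (hsemifinite : ∀ s : Set X, MeasurableSet s → μ s = ⊤ →
      ∃ t, t ⊆ s ∧ MeasurableSet t ∧ 0 < μ t ∧ μ t < ⊤) :
    (∀ s : Set X, (∀ F : Set X, MeasurableSet F → μ F < ⊤ → MeasurableSet (s ∩ F)) →
        MeasurableSet s) ↔
      LocallyDetermined Set.univ {s : Set X | MeasurableSet s}
        {s : Set X | MeasurableSet s ∧ μ s = 0} := by
  constructor
  · intro hloc E hE hgen s _ hs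
    refine hloc s fun F hF hFfin => ?_
    obtain ⟨T, hTE, hT, hnull⟩ :=
      exists_countable_subset_measure_diff_sUnion_eq_zero_of_isEssSup hE hgen hF hFfin.ne
    have hT_meas : MeasurableSet (⋃₀ T) := .sUnion hT fun t ht => hE (hTE ht)
    have hsT : MeasurableSet (s ∩ ⋃₀ T) := by
      rw [sUnion_eq_biUnion, inter_iUnion₂]
      exact .biUnion hT fun t ht => hs t (hTE ht)
    exact measurableSet_inter_of_measure_diff_eq_zero hcomplete hF hT_meas hsT hnull
  · intro hld s hs
    exact hld _ (fun F hF => hF.1) (isEssSup_univ_setOf_measure_lt_top hsemifinite) s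
      (subset_univ s) fun F hF => hs F hF.1 hF.2

end MSNPaper
end

section
/- Let (X, 𝒜, 𝒩) be a saturated localizable MSN and ℰ ⊆ 𝒜 an 𝒩-generating collection. Define 𝒜_ℰ = {A ⊆ X : A ∩ E ∈ 𝒜 for every E ∈ ℰ} and 𝒩_ℰ = {N ⊆ X : N ∩ E ∈ 𝒩 for every E ∈ ℰ}. Then (i) 𝒜 ∩ 𝒩_ℰ = 𝒩, and (ii) for every H ∈ 𝒜_ℰ there exists S ∈ 𝒜 with H Δ S ∈ 𝒩_ℰ. (These two facts express that the identity map of X induces an isomorphism of Boolean algebras 𝒜/𝒩 ≅ 𝒜_ℰ/𝒩_ℰ.) -/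
open Set MeasureTheory ENNReal

namespace MSNPaper

variable {X Y : Type*}

private lemma pair_union_aux {X : Type*} {C : Set (Set X)}
    (h : ∀ f : ℕ → Set X, (∀ n, f n ∈ C) → (⋃ n, f n) ∈ C)
    {a b : Set X} (ha : a ∈ C) (hb : b ∈ C) : a ∪ b ∈ C := by
  have key := h (fun n => if n = 0 then a else b)
    (by intro n; split <;> assumption)
  have : (⋃ n, if n = 0 then a else b) = a ∪ b := by
    ext x
    simp only [mem_iUnion, mem_union]
    constructor
    · rintro ⟨n, hn⟩
      by_cases hn0 : n = 0 <;> simp [hn0] at hn <;> tauto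
    · rintro (h | h)
      · exact ⟨0, by simp [h]⟩
      · exact ⟨1, by simp [h]⟩
  rwa [this] at key

/-- For a saturated localizable MSN and an `N`-generating collection `E`, with
`A_E = {s : s ∩ e ∈ A for all e ∈ E}` and `N_E = {s : s ∩ e ∈ N for all e ∈ E}`:
(i) `A ∩ N_E = N`, and (ii) every `H ∈ A_E` differs from some `S ∈ A` by a member
of `N_E`.  (These express that `A/N ≅ A_E/N_E`.) -/
theorem lldeq_bool_iso {X : Type*} (A N : Set (Set X))
    (hMSN : IsMSN Set.univ A N) (hsat : Saturated N) (hloc : Localizable A N)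
    (E : Set (Set X)) (hEA : E ⊆ A) (hgen : IsEssSup A N E Set.univ) :
    A ∩ {n : Set X | ∀ e ∈ E, n ∩ e ∈ N} = N ∧
      ∀ H ∈ {s : Set X | ∀ e ∈ E, s ∩ e ∈ A},
        ∃ S ∈ A, symmDiff H S ∈ {n : Set X | ∀ e ∈ E, n ∩ e ∈ N} := by
  obtain ⟨⟨hAsub, hAempty, hAcompl, hAunion⟩, hNA, hNempty, hNdown, hNunion⟩ := hMSN
  constructor
  · ext s
    constructor
    · rintro ⟨hsA, hsN⟩
      have hUA : Set.univ \ s ∈ A := hAcompl s hsA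
      have hUB : IsEssUB N E (Set.univ \ s) := by
        intro e he
        have : e \ (Set.univ \ s) = s ∩ e := by
          ext x; simp [and_comm]
        rw [this]
        exact hsN e he
      have := hgen.2.2 _ hUA hUB
      have heq : Set.univ \ (Set.univ \ s) = s := by ext x; simp
      rwa [heq] at this
    · intro hs
      exact ⟨hNA hs, fun e he => hsat (s ∩ e) s inter_subset_left hs⟩
  · intro H hH
    set F : Set (Set X) := (fun e => H ∩ e) '' E with hF
    have hFA : F ⊆ A := by
      rintro _ ⟨e, he, rfl⟩
      exact hH e he
    obtain ⟨S, hSA, hSub, hSsup⟩ := hloc F hFA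
    refine ⟨S, hSA, ?_⟩
    intro e he
    have h1 : (H \ S) ∩ e ∈ N := by
      have : (H \ S) ∩ e = (H ∩ e) \ S := by ext x; simp; tauto
      rw [this]
      exact hSub (H ∩ e) ⟨e, he, rfl⟩
    have h2 : (S \ H) ∩ e ∈ N := by
      set U : Set X := (Set.univ \ e) ∪ (H ∩ e) with hU
      have hUA : U ∈ A := pair_union_aux hAunion (hAcompl e (hEA he)) (hH e he)
      have hUB2 : IsEssUB N F U := by
        rintro _ ⟨e', he', rfl⟩
        have : (H ∩ e') \ U = ∅ := by
          ext x; simp [hU]; tauto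
        rw [this]
        exact hNempty
      have hSU : S \ U ∈ N := hSsup U hUA hUB2
      refine hsat _ _ ?_ hSU
      intro x hx
      simp only [hU, mem_diff, mem_inter_iff, mem_union, mem_univ, true_and] at *
      tauto
    have heq : (symmDiff H S) ∩ e = ((H \ S) ∩ e) ∪ ((S \ H) ∩ e) := by
      rw [Set.symmDiff_def]
      ext x; simp; tauto
    rw [mem_setOf_eq] at *
    show symmDiff H S ∩ e ∈ N
    rw [heq]
    exact pair_union_aux hNunion h1 h2


end MSNPaper
end

section
/- Let (X, 𝒜, 𝒩) be an lld MSN and Y ⊆ X an arbitrary subset. Then the subMSN (Y, 𝒜_Y, 𝒩_Y) is lld, and the inclusion map Y → X is supremum preserving: whenever ℰ ⊆ 𝒜 admits an 𝒩-essential supremum S, the set S ∩ Y is an 𝒩_Y-essential supremum of {E ∩ Y : E ∈ ℰ}. -/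
open Set MeasureTheory ENNReal

namespace MSNPaper

variable {X Y : Type*}

section Aux

variable {A N : Set (Set X)}

lemma pair_union {P : Set (Set X)}
    (hP : ∀ f : ℕ → Set X, (∀ n, f n ∈ P) → (⋃ n, f n) ∈ P)
    {a b : Set X} (ha : a ∈ P) (hb : b ∈ P) : a ∪ b ∈ P := by
  have h := hP (fun n => if n = 0 then a else b)
    (fun n => by by_cases h : n = 0 <;> simp [h, ha, hb])
  have e : (⋃ n : ℕ, (if n = 0 then a else b)) = a ∪ b := by
    ext x
    simp only [Set.mem_iUnion, Set.mem_union]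
    constructor
    · rintro ⟨n, hn⟩
      by_cases h : n = 0
      · simp [h] at hn; exact Or.inl hn
      · simp [h] at hn; exact Or.inr hn
    · rintro (h | h)
      · exact ⟨0, by simpa⟩
      · exact ⟨1, by simpa⟩
  rwa [e] at h

lemma A_univ (hMSN : IsMSN (Set.univ : Set X) A N) : Set.univ ∈ A := by
  have := hMSN.1.2.2.1 ∅ hMSN.1.2.1
  simpa using this

lemma A_compl (hMSN : IsMSN (Set.univ : Set X) A N) {a : Set X} (ha : a ∈ A) : aᶜ ∈ A := by
  have := hMSN.1.2.2.1 a ha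
  rwa [← Set.compl_eq_univ_diff] at this

lemma A_union (hMSN : IsMSN (Set.univ : Set X) A N) {a b : Set X}
    (ha : a ∈ A) (hb : b ∈ A) : a ∪ b ∈ A :=
  pair_union hMSN.1.2.2.2 ha hb

lemma A_inter (hMSN : IsMSN (Set.univ : Set X) A N) {a b : Set X}
    (ha : a ∈ A) (hb : b ∈ A) : a ∩ b ∈ A := by
  have := A_compl hMSN (A_union hMSN (A_compl hMSN ha) (A_compl hMSN hb))
  rwa [Set.compl_union, compl_compl, compl_compl] at this

lemma A_diff (hMSN : IsMSN (Set.univ : Set X) A N) {a b : Set X}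
    (ha : a ∈ A) (hb : b ∈ A) : a \ b ∈ A := by
  rw [Set.diff_eq]
  exact A_inter hMSN ha (A_compl hMSN hb)

lemma N_union (hMSN : IsMSN (Set.univ : Set X) A N) {a b : Set X}
    (ha : a ∈ N) (hb : b ∈ N) : a ∪ b ∈ N :=
  pair_union hMSN.2.2.2.2 ha hb

lemma N_down (hsat : Saturated N) {s t : Set X} (h : s ⊆ t) (ht : t ∈ N) : s ∈ N :=
  hsat s t h ht

lemma mem_subN (hsat : Saturated N) {Y t : Set X} :
    t ∈ Sub N Y ↔ t ∈ N ∧ t ⊆ Y := by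
  constructor
  · rintro ⟨n, hn, rfl⟩
    exact ⟨hsat _ _ Set.inter_subset_left hn, Set.inter_subset_right⟩
  · rintro ⟨ht, hsub⟩
    exact ⟨t, ht, by rwa [Set.inter_eq_left]⟩

lemma gen_insert (hMSN : IsMSN (Set.univ : Set X) A N) (hsat : Saturated N)
    {F : Set (Set X)} {S : Set X} (hS : IsEssSup A N F S) :
    IsEssSup A N (insert Sᶜ F) Set.univ := by
  refine ⟨A_univ hMSN, fun e _ => by simpa using hMSN.2.2.1, ?_⟩
  intro u hu hub
  have h1 : Sᶜ \ u ∈ N := hub _ (Set.mem_insert _ _)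
  have h2 : S \ u ∈ N := hS.2.2 u hu (fun e he => hub e (Set.mem_insert_of_mem _ he))
  have hsub : Set.univ \ u ⊆ (S \ u) ∪ (Sᶜ \ u) := by
    intro x hx
    by_cases h : x ∈ S
    · exact Or.inl ⟨h, hx.2⟩
    · exact Or.inr ⟨h, hx.2⟩
  exact N_down hsat hsub (N_union hMSN h2 h1)

lemma negl_of_local (hMSN : IsMSN (Set.univ : Set X) A N)
    {H : Set (Set X)} {g : Set X}
    (hgen : IsEssSup A N H Set.univ) (hg : g ∈ A) (hall : ∀ h ∈ H, g ∩ h ∈ N) : g ∈ N := by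
  have hu : gᶜ ∈ A := A_compl hMSN hg
  have hub : IsEssUB N H gᶜ := by
    intro h hh
    have e : h \ gᶜ = g ∩ h := by
      ext x; simp only [Set.mem_diff, Set.mem_compl_iff, not_not, Set.mem_inter_iff]
      tauto
    rw [e]; exact hall h hh
  have h := hgen.2.2 gᶜ hu hub
  have e : Set.univ \ gᶜ = g := by ext x; simp
  rwa [e] at h

lemma mem_A_of_local (hld : LocallyDetermined Set.univ A N)
    {H : Set (Set X)} {s : Set X}
    (hH : H ⊆ A) (hgen : IsEssSup A N H Set.univ) (hs : ∀ h ∈ H, s ∩ h ∈ A) : s ∈ A :=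
  hld H hH hgen s (Set.subset_univ s) hs

lemma envelope (hMSN : IsMSN (Set.univ : Set X) A N) (hsat : Saturated N)
    (hloc : Localizable A N) (hld : LocallyDetermined Set.univ A N) (t : Set X) :
    ∃ h ∈ A, t ⊆ h ∧ ∀ a ∈ A, a ∩ t = ∅ → a ∩ h ∈ N := by
  set D : Set (Set X) := {a ∈ A | a ∩ t = ∅} with hD
  obtain ⟨W, hW⟩ := hloc D (Set.sep_subset _ _)
  set h : Set X := Wᶜ ∪ (t ∩ W) with hh
  have key : ∀ a, a ∩ t = ∅ → a ∩ h = a \ W := by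
    intro a hat
    ext x
    simp only [hh, Set.mem_inter_iff, Set.mem_union, Set.mem_compl_iff, Set.mem_diff]
    constructor
    · rintro ⟨hxa, (hxW | ⟨hxt, _⟩)⟩
      · exact ⟨hxa, hxW⟩
      · exact absurd (Set.mem_inter hxa hxt) (by simp [hat])
    · rintro ⟨hxa, hxW⟩
      exact ⟨hxa, Or.inl hxW⟩
  have hmem : h ∈ A := by
    refine mem_A_of_local hld (H := insert Wᶜ D) ?_ (gen_insert hMSN hsat hW) ?_
    · rintro x (rfl | hx)
      · exact A_compl hMSN hW.1
      · exact hx.1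
    · rintro e (rfl | he)
      · have e1 : h ∩ Wᶜ = Wᶜ := by
          ext x
          simp only [hh, Set.mem_inter_iff, Set.mem_union, Set.mem_compl_iff]
          tauto
        rw [e1]; exact A_compl hMSN hW.1
      · rw [Set.inter_comm, key e he.2]
        exact hMSN.2.1 (hW.2.1 e he)
  refine ⟨h, hmem, ?_, ?_⟩
  · intro x hx
    by_cases hxW : x ∈ W
    · exact Or.inr ⟨hx, hxW⟩
    · exact Or.inl hxW
  · intro a ha hat
    rw [key a hat]
    exact hW.2.1 a ⟨ha, hat⟩

lemma supPres (hMSN : IsMSN (Set.univ : Set X) A N) (hsat : Saturated N)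
    (hloc : Localizable A N) (hld : LocallyDetermined Set.univ A N) (Y : Set X) :
    ∀ E ⊆ A, ∀ S, IsEssSup A N E S →
      IsEssSup (Sub A Y) (Sub N Y) ((· ∩ Y) '' E) (S ∩ Y) := by
  intro E hE S hS
  refine ⟨⟨S, hS.1, rfl⟩, ?_, ?_⟩
  · rintro e' ⟨e, he, rfl⟩
    rw [mem_subN hsat]
    constructor
    · refine N_down hsat ?_ (hS.2.1 e he)
      intro x hx
      exact ⟨hx.1.1, fun h => hx.2 ⟨h, hx.1.2⟩⟩
    · intro x hx; exact hx.1.2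
  · rintro U hU hub
    obtain ⟨u, hu, rfl⟩ := hU
    -- the family of negligible traces
    set F0 : Set (Set X) := (fun e => (e \ u) ∩ Y) '' E with hF0
    have hF0N : F0 ⊆ N := by
      rintro f ⟨e, he, rfl⟩
      have h1 : (e ∩ Y) \ (u ∩ Y) ∈ Sub N Y := hub (e ∩ Y) ⟨e, he, rfl⟩
      rw [mem_subN hsat] at h1
      refine N_down hsat ?_ h1.1
      intro x hx
      exact ⟨⟨hx.1.1, hx.2⟩, fun h => hx.1.2 h.1⟩
    obtain ⟨V, hV⟩ := hloc F0 (fun f hf => hMSN.2.1 (hF0N hf))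
    have hVN : V ∈ N := by
      have h := hV.2.2 ∅ hMSN.1.2.1 (fun f hf => by simpa using hF0N hf)
      simpa using h
    set T : Set X := S \ (u ∪ V) with hT
    have hTA : T ∈ A := A_diff hMSN hS.1 (A_union hMSN hu (hMSN.2.1 hVN))
    set G : Set (Set X) := (fun e => e ∩ T) '' E with hG
    have hGA : G ⊆ A := by
      rintro g ⟨e, he, rfl⟩
      exact A_inter hMSN (hE he) hTA
    have hTG : IsEssSup A N G T := by
      refine ⟨hTA, ?_, ?_⟩
      · rintro g ⟨e, he, rfl⟩
        show (e ∩ T) \ T ∈ N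
        have h0 : (e ∩ T) \ T = ∅ := by ext z; simp only [Set.mem_diff, Set.mem_inter_iff, Set.mem_empty_iff_false, iff_false]; tauto
        rw [h0]; exact hMSN.2.2.1
      · intro u0 hu0 hub0
        have hu' : u0 ∪ Tᶜ ∈ A := A_union hMSN hu0 (A_compl hMSN hTA)
        have hub' : IsEssUB N E (u0 ∪ Tᶜ) := by
          intro e he
          refine N_down hsat ?_ (hub0 (e ∩ T) ⟨e, he, rfl⟩)
          intro x hx
          have hxT : x ∈ T := by
            by_contra h
            exact hx.2 (Or.inr h)
          exact ⟨⟨hx.1, hxT⟩, fun h => hx.2 (Or.inl h)⟩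
        have h := hS.2.2 _ hu' hub'
        refine N_down hsat ?_ h
        intro x hx
        exact ⟨hx.1.1, by rintro (h | h); exact hx.2 h; exact h hx.1⟩
    have hgen := gen_insert hMSN hsat hTG
    have hHsubA : insert Tᶜ G ⊆ A := by
      rintro x (rfl | hx)
      · exact A_compl hMSN hTA
      · exact hGA hx
    -- local negligibility of T ∩ Y
    have hloc_negl : ∀ h ∈ insert Tᶜ G, (T ∩ Y) ∩ h ∈ N := by
      rintro x (rfl | ⟨e, he, rfl⟩)
      · have : (T ∩ Y) ∩ Tᶜ = ∅ := by
          ext z; simp only [Set.mem_inter_iff, Set.mem_compl_iff, Set.mem_empty_iff_false]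
          tauto
        rw [this]; exact hMSN.2.2.1
      · refine N_down hsat ?_ (hV.2.1 _ ⟨e, he, rfl⟩)
        intro z hz
        obtain ⟨⟨⟨hzS, hzuV⟩, hzY⟩, hze, _⟩ := hz
        refine ⟨⟨⟨hze, fun h => hzuV (Or.inl h)⟩, hzY⟩, fun h => hzuV (Or.inr h)⟩
    have hTYA : T ∩ Y ∈ A :=
      mem_A_of_local hld hHsubA hgen (fun h hh => hMSN.2.1 (hloc_negl h hh))
    have hTYN : T ∩ Y ∈ N := negl_of_local hMSN hgen hTYA hloc_negl
    -- conclude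
    rw [mem_subN hsat]
    constructor
    · refine N_down hsat ?_ (N_union hMSN hTYN hVN)
      intro x hx
      obtain ⟨⟨hxS, hxY⟩, hxu⟩ := hx
      by_cases hxV : x ∈ V
      · exact Or.inr hxV
      · refine Or.inl ⟨⟨hxS, ?_⟩, hxY⟩
        rintro (h | h)
        · exact hxu ⟨h, hxY⟩
        · exact hxV h
    · intro x hx; exact hx.1.2

lemma image_sep {A : Set (Set X)} {Y : Set X} {E' : Set (Set X)} (hE' : E' ⊆ Sub A Y) :
    (· ∩ Y) '' {a ∈ A | a ∩ Y ∈ E'} = E' := by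
  ext t
  constructor
  · rintro ⟨a, ⟨haA, haE⟩, rfl⟩
    exact haE
  · intro ht
    obtain ⟨a, haA, rfl⟩ := hE' ht
    exact ⟨a, ⟨haA, ht⟩, rfl⟩

end Aux

/-- Every subMSN of an lld (saturated, localizable, locally determined) MSN is lld,
and the inclusion map is supremum preserving. -/
theorem subMSN_lld {X : Type*} (A N : Set (Set X))
    (hMSN : IsMSN Set.univ A N) (hsat : Saturated N)
    (hloc : Localizable A N) (hld : LocallyDetermined Set.univ A N)
    (Y : Set X) :
    IsMSN Y (Sub A Y) (Sub N Y) ∧ Saturated (Sub N Y) ∧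
      Localizable (Sub A Y) (Sub N Y) ∧ LocallyDetermined Y (Sub A Y) (Sub N Y) ∧
      ∀ E ⊆ A, ∀ S, IsEssSup A N E S →
        IsEssSup (Sub A Y) (Sub N Y) ((· ∩ Y) '' E) (S ∩ Y) := by
  have hNA : N ⊆ A := hMSN.2.1
  constructor
  · -- trace MSN
    constructor
    · refine ⟨?_, ?_, ?_, ?_⟩
      · rintro s ⟨a, ha, rfl⟩; exact Set.inter_subset_right
      · exact ⟨∅, hMSN.1.2.1, by simp⟩
      · rintro s ⟨a, ha, rfl⟩
        refine ⟨Set.univ \ a, hMSN.1.2.2.1 a ha, ?_⟩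
        ext x
        simp only [Set.mem_inter_iff, Set.mem_diff, Set.mem_univ, true_and]
        tauto
      · intro f hf
        choose a ha haY using hf
        refine ⟨⋃ n, a n, hMSN.1.2.2.2 a ha, ?_⟩
        show (⋃ n, a n) ∩ Y = ⋃ n, f n
        rw [Set.iUnion_inter]
        exact Set.iUnion_congr haY
    · refine ⟨?_, ?_, ?_, ?_⟩
      · rintro s ⟨n, hn, rfl⟩; exact ⟨n, hNA hn, rfl⟩
      · exact ⟨∅, hMSN.2.2.1, by simp⟩
      · intro s hs t ht hst
        rw [mem_subN hsat] at ht ⊢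
        exact ⟨N_down hsat hst ht.1, hst.trans ht.2⟩
      · intro f hf
        rw [mem_subN hsat]
        have h1 : ∀ n, f n ∈ N ∧ f n ⊆ Y := fun n => (mem_subN hsat).1 (hf n)
        exact ⟨hMSN.2.2.2.2 f (fun n => (h1 n).1), Set.iUnion_subset (fun n => (h1 n).2)⟩
  constructor
  · -- trace saturated
    intro s t hst ht
    rw [mem_subN hsat] at ht ⊢
    exact ⟨N_down hsat hst ht.1, hst.trans ht.2⟩
  constructor
  · -- trace localizable
    intro E' hE'
    obtain ⟨S, hS⟩ := hloc {a ∈ A | a ∩ Y ∈ E'} (Set.sep_subset _ _)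
    refine ⟨S ∩ Y, ?_⟩
    have h := supPres hMSN hsat hloc hld Y _ (Set.sep_subset _ _) S hS
    rwa [image_sep hE'] at h
  constructor
  · -- trace locally determined
    intro E' hE' hgenY s hsY hs
    set F : Set (Set X) := {a ∈ A | a ∩ Y ∈ E'} with hF
    obtain ⟨S, hS⟩ := hloc F (Set.sep_subset _ _)
    have hsup := supPres hMSN hsat hloc hld Y F (Set.sep_subset _ _) S hS
    rw [image_sep hE'] at hsup
    have hYSN : Y \ S ∈ N := by
      have h := hgenY.2.2 (S ∩ Y) hsup.1 hsup.2.1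
      rw [mem_subN hsat] at h
      refine N_down hsat ?_ h.1
      intro x hx
      exact ⟨hx.1, fun h' => hx.2 h'.1⟩
    obtain ⟨h, hhA, hsh, hprop⟩ := envelope hMSN hsat hloc hld s
    set g : Set X := (h ∩ Y) \ s with hg
    have hgf : ∀ f ∈ F, g ∩ f ∈ N := by
      intro f hf
      obtain ⟨a, haA, haY⟩ := hs (f ∩ Y) hf.2
      have hca : a ∩ Y = s ∩ (f ∩ Y) := haY
      set c : Set X := f \ a with hc
      have hcs : c ∩ s = ∅ := by
        ext x
        simp only [hc, Set.mem_inter_iff, Set.mem_diff, Set.mem_empty_iff_false, iff_false]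
        rintro ⟨⟨hxf, hxa⟩, hxs⟩
        have hxY : x ∈ Y := hsY hxs
        have : x ∈ a ∩ Y := by rw [hca]; exact ⟨hxs, hxf, hxY⟩
        exact hxa this.1
      have hchN : c ∩ h ∈ N := hprop c (A_diff hMSN hf.1 haA) hcs
      refine N_down hsat ?_ hchN
      intro x hx
      obtain ⟨⟨⟨hxh, hxY⟩, hxs⟩, hxf⟩ := hx
      have hxa : x ∉ a := by
        intro hxa
        have : x ∈ s ∩ (f ∩ Y) := by rw [← hca]; exact ⟨hxa, hxY⟩
        exact hxs this.1
      exact ⟨⟨hxf, hxa⟩, hxh⟩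
    have hgen := gen_insert hMSN hsat hS
    have hgSc : g ∩ Sᶜ ∈ N := by
      refine N_down hsat ?_ hYSN
      intro x hx
      exact ⟨hx.1.1.2, hx.2⟩
    have hHA : insert Sᶜ F ⊆ A := by
      rintro x (rfl | hx)
      · exact A_compl hMSN hS.1
      · exact hx.1
    have hallN : ∀ e ∈ insert Sᶜ F, g ∩ e ∈ N := by
      rintro e (rfl | he)
      · exact hgSc
      · exact hgf e he
    have hgA : g ∈ A := mem_A_of_local hld hHA hgen (fun e he => hNA (hallN e he))
    have hgN : g ∈ N := negl_of_local hMSN hgen hgA hallN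
    refine ⟨h \ g, A_diff hMSN hhA (hNA hgN), ?_⟩
    ext x
    simp only [Set.mem_inter_iff, Set.mem_diff, hg]
    constructor
    · rintro ⟨⟨hxh, hxg⟩, hxY⟩
      by_contra hxs
      exact hxg ⟨⟨hxh, hxY⟩, hxs⟩
    · intro hxs
      exact ⟨⟨hsh hxs, fun h' => h'.2 hxs⟩, hsY hxs⟩
  · exact supPres hMSN hsat hloc hld Y


end MSNPaper
end

section
/- Let (X, 𝒜, 𝒩) be a locally determined MSN, (Y, ℬ) a nonempty measurable space, ℰ ⊆ 𝒜 an 𝒩-generating collection, and ⟨f_E⟩_{E∈ℰ} a compatible family subordinated to ℰ. If f, g : X → Y are both gluings of this family, then {x ∈ X : f(x) ≠ g(x)} ∈ 𝒩. -/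
open Set MeasureTheory ENNReal

namespace MSNPaper

variable {X Y : Type*}

/-- A family of partially defined maps `g e : e → Y` (each represented by a total map
whose behaviour matters only on `e`), each measurable from the trace σ-algebra on `e`
to `B`. -/
def Subordinate {X Y : Type*} (A : Set (Set X)) (B : Set (Set Y)) (E : Set (Set X))
    (g : Set X → X → Y) : Prop :=
  ∀ e ∈ E, ∀ b ∈ B, e ∩ g e ⁻¹' b ∈ Sub A e

/-- The family is compatible: any two of its members coincide almost everywhere
on the intersection of their domains. -/
def Compatible {X Y : Type*} (N : Set (Set X)) (E : Set (Set X))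
    (g : Set X → X → Y) : Prop :=
  ∀ e ∈ E, ∀ e' ∈ E, e ∩ e' ∩ {x | g e x ≠ g e' x} ∈ N

/-- `f` is a gluing of the family `g` subordinated to `E`: it is `(A, B)`-measurable and
coincides with `g e` almost everywhere on `e`, for each `e ∈ E`. -/
def IsGluing {X Y : Type*} (A N : Set (Set X)) (B : Set (Set Y)) (E : Set (Set X))
    (g : Set X → X → Y) (f : X → Y) : Prop :=
  (∀ b ∈ B, f ⁻¹' b ∈ A) ∧ ∀ e ∈ E, e ∩ {x | f x ≠ g e x} ∈ N

/-- Uniqueness of gluings over a locally determined MSN: two gluings of the same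
compatible family subordinated to a generating collection agree almost everywhere. -/
theorem gluing_unique {X Y : Type*} (A N : Set (Set X))
    (hMSN : IsMSN Set.univ A N) (hsat : Saturated N)
    (hld : LocallyDetermined Set.univ A N)
    (B : Set (Set Y)) (hB : IsSigmaAlgebraOn Set.univ B) [Nonempty Y]
    (E : Set (Set X)) (hEA : E ⊆ A) (hgen : IsEssSup A N E Set.univ)
    (g : Set X → X → Y) (hsub : Subordinate A B E g) (hcomp : Compatible N E g)
    (f f' : X → Y)
    (hf : IsGluing A N B E g f) (hf' : IsGluing A N B E g f') :
    {x | f x ≠ f' x} ∈ N := by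
  obtain ⟨hAlg, hNsub, _, _, hNunion⟩ := hMSN
  set D : Set X := {x | f x ≠ f' x} with hD
  have key : ∀ e ∈ E, e ∩ D ∈ N := by
    intro e he
    have h1 := hf.2 e he
    have h2 := hf'.2 e he
    have hu : (e ∩ {x | f x ≠ g e x}) ∪ (e ∩ {x | f' x ≠ g e x}) ∈ N := by
      have := hNunion (fun n => if n = 0 then e ∩ {x | f x ≠ g e x} else e ∩ {x | f' x ≠ g e x})
        (by intro n; by_cases h : n = 0 <;> simp [h, h1, h2])
      refine hsat _ _ ?_ this
      intro x hx
      rcases hx with hx | hx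
      · exact mem_iUnion.2 ⟨0, by simpa using hx⟩
      · exact mem_iUnion.2 ⟨1, by simpa using hx⟩
    refine hsat _ _ ?_ hu
    rintro x ⟨hxe, hxD⟩
    by_cases h : f x = g e x
    · exact Or.inr ⟨hxe, fun h' => hxD (h.trans h'.symm)⟩
    · exact Or.inl ⟨hxe, h⟩
  have hDA : D ∈ A := by
    refine hld E hEA hgen D (subset_univ _) fun e he => ?_
    rw [inter_comm]
    exact hNsub (key e he)
  have hDc : univ \ D ∈ A := hAlg.2.2.1 D hDA
  have hub : IsEssUB N E (univ \ D) := by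
    intro e he
    refine hsat _ _ ?_ (key e he)
    intro x hx
    exact ⟨hx.1, by simpa using hx.2⟩
  have := hgen.2.2 (univ \ D) hDc hub
  refine hsat _ _ ?_ this
  intro x hx
  exact ⟨trivial, by simpa using hx⟩


end MSNPaper
end

section
/- Let ⟨(Y_i, ℬ_i)⟩_{i∈I} be a family of countably separated measurable spaces with card I ≤ 𝔠 (the cardinality of the continuum). Then the disjoint union ⨿_{i∈I} Y_i, equipped with the σ-algebra {A : A ∩ Y_i ∈ ℬ_i for every i ∈ I}, is countably separated. -/
/-!
Since `I` injects into `Set ℕ`, the countably many sets `{i | n ∈ f i}` separate the indices,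
and their preimages separate points lying in different summands. Points in the same summand are
separated by the sets `{⟨i, y⟩ | y ∈ c i n}`, where `c i` enumerates a separating family of the
`i`-th summand: for fixed `n` these glue the `n`-th sets of all summands into one measurable set.
-/

open Set MeasureTheory ENNReal

namespace MSNPaper

variable {X Y : Type*}

/-- A measurable space structure `B` is countably separated if some countable
subfamily of `B` separates points. -/
def CtblySeparated {Y : Type*} (B : Set (Set Y)) : Prop :=
  ∃ C ⊆ B, C.Countable ∧ ∀ y₁ y₂ : Y, y₁ ≠ y₂ → ∃ c ∈ C, Xor' (y₁ ∈ c) (y₂ ∈ c)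

theorem IsSigmaAlgebraOn.empty_mem {Z : Set X} {A : Set (Set X)} (h : IsSigmaAlgebraOn Z A) :
    ∅ ∈ A :=
  h.2.1

theorem IsSigmaAlgebraOn.univ_mem {A : Set (Set X)} (h : IsSigmaAlgebraOn univ A) : univ ∈ A := by
  simpa using h.2.2.1 ∅ h.empty_mem

theorem ctblySeparated_of_seq {ι : Type*} [Countable ι] {B : Set (Set Y)} (c : ι → Set Y)
    (hcB : ∀ n, c n ∈ B) (hsep : ∀ y₁ y₂ : Y, y₁ ≠ y₂ → ∃ n, Xor (y₁ ∈ c n) (y₂ ∈ c n)) :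
    CtblySeparated B := by
  refine ⟨range c, range_subset_iff.2 hcB, countable_range c, fun y₁ y₂ hne => ?_⟩
  obtain ⟨n, hn⟩ := hsep y₁ y₂ hne
  exact ⟨c n, mem_range_self n, hn⟩

/-- Adjoining `∅` makes the separating family nonempty, so that it can be enumerated. -/
theorem CtblySeparated.exists_seq {B : Set (Set Y)} (h : CtblySeparated B) (h0 : ∅ ∈ B) :
    ∃ c : ℕ → Set Y, (∀ n, c n ∈ B) ∧
      ∀ y₁ y₂ : Y, y₁ ≠ y₂ → ∃ n, Xor (y₁ ∈ c n) (y₂ ∈ c n) := by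
  obtain ⟨C, hCB, hC, hsep⟩ := h
  obtain ⟨c, hc⟩ := (hC.insert ∅).exists_eq_range (insert_nonempty _ _)
  refine ⟨c, fun n => ?_, fun y₁ y₂ hne => ?_⟩
  · have hn : c n ∈ insert ∅ C := hc ▸ mem_range_self n
    exact hn.elim (fun h => h ▸ h0) (fun h => hCB h)
  · obtain ⟨s, hs, hxor⟩ := hsep y₁ y₂ hne
    obtain ⟨n, rfl⟩ : s ∈ range c := hc ▸ mem_insert_of_mem _ hs
    exact ⟨n, hxor⟩

theorem exists_injective_set_nat_of_mk_le_continuum {I : Type*}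
    (hI : Cardinal.mk I ≤ Cardinal.continuum) : ∃ f : I → Set ℕ, Function.Injective f := by
  obtain ⟨f⟩ := Cardinal.lift_mk_le'.1
    (by simpa [Cardinal.mk_set_nat] using hI :
      Cardinal.lift.{0} (Cardinal.mk I) ≤ Cardinal.lift (Cardinal.mk (Set ℕ)))
  exact ⟨f, f.injective⟩

theorem ctblySeparated_univ_of_injective {I : Type*} {f : I → Set ℕ} (hf : Function.Injective f) :
    CtblySeparated (univ : Set (Set I)) := by
  refine ctblySeparated_of_seq (fun n => {i | n ∈ f i}) (fun _ => mem_univ _) fun i j hij => ?_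
  obtain ⟨n, hn⟩ : ∃ n, ¬(n ∈ f i ↔ n ∈ f j) := by
    by_contra! h
    exact hij (hf (Set.ext h))
  exact ⟨n, (xor_iff_not_iff _ _).2 hn⟩

section coProd

variable {I : Type*} {Yf : I → Type*} {B : ∀ i, Set (Set (Yf i))}

theorem preimage_fst_mem_coProd (h0 : ∀ i, ∅ ∈ B i) (h1 : ∀ i, univ ∈ B i) (s : Set I) :
    Sigma.fst ⁻¹' s ∈ coProd B := by
  intro i
  by_cases hi : i ∈ s
  · simpa [preimage, hi] using h1 i
  · simpa [preimage, hi] using h0 i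

theorem setOf_snd_mem_mem_coProd {c : ∀ i, Set (Yf i)} (hc : ∀ i, c i ∈ B i) :
    {p : (i : I) × Yf i | p.2 ∈ c p.1} ∈ coProd B :=
  hc

theorem ctblySeparated_coProd (h0 : ∀ i, ∅ ∈ B i) (h1 : ∀ i, univ ∈ B i)
    (hI : CtblySeparated (univ : Set (Set I))) (hcs : ∀ i, CtblySeparated (B i)) :
    CtblySeparated (coProd B) := by
  obtain ⟨s, -, hs⟩ := hI.exists_seq (mem_univ ∅)
  choose c hcB hc using fun i => (hcs i).exists_seq (h0 i)
  refine ctblySeparated_of_seq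
    (Sum.elim (fun n => Sigma.fst ⁻¹' s n) (fun n => {p | p.2 ∈ c p.1 n}))
    (Sum.rec (fun n => preimage_fst_mem_coProd h0 h1 (s n))
      (fun n => setOf_snd_mem_mem_coProd (fun i => hcB i n))) ?_
  rintro ⟨i, y⟩ ⟨j, z⟩ hne
  by_cases hij : i = j
  · subst hij
    obtain ⟨n, hn⟩ := hc i y z fun h => hne (h ▸ rfl)
    exact ⟨Sum.inr n, hn⟩
  · obtain ⟨n, hn⟩ := hs i j hij
    exact ⟨Sum.inl n, hn⟩

end coProd

/-- A disjoint union of at most continuum many countably separated measurable spaces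
is countably separated. -/
theorem coprod_ctblySeparated {I : Type*} {Yf : I → Type*}
    (B : ∀ i, Set (Set (Yf i)))
    (hB : ∀ i, IsSigmaAlgebraOn Set.univ (B i))
    (hcs : ∀ i, CtblySeparated (B i))
    (hI : Cardinal.mk I ≤ Cardinal.continuum) :
    CtblySeparated (coProd B) := by
  obtain ⟨f, hf⟩ := exists_injective_set_nat_of_mk_le_continuum hI
  exact ctblySeparated_coProd (fun i => (hB i).empty_mem) (fun i => (hB i).univ_mem)
    (ctblySeparated_univ_of_injective hf) hcs

end MSNPaper
end

section
/- Let (X, 𝒜, 𝒩) be an lld MSN, (Y, ℬ) a nonempty countably separated measurable space, ℰ ⊆ 𝒜 an 𝒩-generating collection, and ⟨f_E⟩_{E∈ℰ} a compatible family subordinated to ℰ. Then this family admits a gluing f : X → Y, unique up to equality 𝒩-almost everywhere (any two gluings differ on a set of 𝒩). -/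
open Set MeasureTheory ENNReal

namespace MSNPaper

variable {X Y : Type*}

section Helpers

variable {Z : Type*} {A : Set (Set Z)}

lemma sa_univ (hA : IsSigmaAlgebraOn (Set.univ : Set Z) A) : Set.univ ∈ A := by
  have := hA.2.2.1 ∅ hA.2.1
  simpa using this

lemma sa_compl (hA : IsSigmaAlgebraOn (Set.univ : Set Z) A) {s : Set Z} (hs : s ∈ A) :
    sᶜ ∈ A := by
  have := hA.2.2.1 s hs
  simpa [Set.compl_eq_univ_diff] using this

lemma union_eq_iUnion_ite (s t : Set Z) :
    s ∪ t = ⋃ n : ℕ, (if n = 0 then s else t) := by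
  ext x
  simp only [Set.mem_union, Set.mem_iUnion]
  constructor
  · rintro (h | h)
    · exact ⟨0, by simpa using h⟩
    · exact ⟨1, by simpa using h⟩
  · rintro ⟨n, h⟩
    split_ifs at h
    · exact Or.inl h
    · exact Or.inr h

lemma sa_union (hA : IsSigmaAlgebraOn (Set.univ : Set Z) A) {s t : Set Z}
    (hs : s ∈ A) (ht : t ∈ A) : s ∪ t ∈ A := by
  rw [union_eq_iUnion_ite]
  exact hA.2.2.2 _ (fun n => by split_ifs <;> assumption)

lemma sa_inter (hA : IsSigmaAlgebraOn (Set.univ : Set Z) A) {s t : Set Z}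
    (hs : s ∈ A) (ht : t ∈ A) : s ∩ t ∈ A := by
  have : s ∩ t = (sᶜ ∪ tᶜ)ᶜ := by simp
  rw [this]
  exact sa_compl hA (sa_union hA (sa_compl hA hs) (sa_compl hA ht))

lemma sa_diff (hA : IsSigmaAlgebraOn (Set.univ : Set Z) A) {s t : Set Z}
    (hs : s ∈ A) (ht : t ∈ A) : s \ t ∈ A :=
  sa_inter hA hs (sa_compl hA ht)

lemma si_union {N : Set (Set Z)} (hN : IsSigmaIdeal A N) {s t : Set Z}
    (hs : s ∈ N) (ht : t ∈ N) : s ∪ t ∈ N := by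
  rw [union_eq_iUnion_ite]
  exact hN.2.2.2 _ (fun n => by split_ifs <;> assumption)

end Helpers

/-- Over an lld MSN, every compatible family with values in a nonempty countably
separated measurable space, subordinated to a generating collection, admits a gluing,
unique up to equality almost everywhere. -/
theorem gluing_lld {X Y : Type*} (A N : Set (Set X))
    (hMSN : IsMSN Set.univ A N) (hsat : Saturated N)
    (hloc : Localizable A N) (hld : LocallyDetermined Set.univ A N)
    (B : Set (Set Y)) (hB : IsSigmaAlgebraOn Set.univ B) [Nonempty Y]
    (hcs : CtblySeparated B)
    (E : Set (Set X)) (hEA : E ⊆ A) (hgen : IsEssSup A N E Set.univ)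
    (g : Set X → X → Y) (hsub : Subordinate A B E g) (hcomp : Compatible N E g) :
    (∃ f, IsGluing A N B E g f) ∧
      ∀ f f', IsGluing A N B E g f → IsGluing A N B E g f' →
        {x | f x ≠ f' x} ∈ N := by
  classical
  obtain ⟨hA, hN⟩ := hMSN
  obtain ⟨C, hCB, hCcnt, hsep⟩ := hcs
  -- enumerate C (together with ∅ so that the family is nonempty)
  obtain ⟨cE, hcE⟩ : ∃ cE : ℕ → Set Y, insert ∅ C = Set.range cE :=
    (hCcnt.insert ∅).exists_eq_range ⟨∅, Set.mem_insert _ _⟩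
  have hcEB : ∀ n, cE n ∈ B := by
    intro n
    have h : cE n ∈ insert ∅ C := hcE ▸ Set.mem_range_self n
    rcases h with h | h
    · rw [h]; exact hB.2.1
    · exact hCB h
  have hrange : ∀ c ∈ C, ∃ n, cE n = c := by
    intro c hc
    have h : c ∈ insert ∅ C := Set.mem_insert_of_mem _ hc
    rw [hcE] at h
    exact h
  -- measurability of the pieces
  have hmeas : ∀ e ∈ E, ∀ b ∈ B, e ∩ g e ⁻¹' b ∈ A := by
    intro e he b hb
    obtain ⟨a, ha, haeq⟩ := hsub e he b hb
    rw [← haeq]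
    exact sa_inter hA ha (hEA he)
  have hmeasC : ∀ e ∈ E, ∀ b ∈ B, e ∩ (g e ⁻¹' b)ᶜ ∈ A := by
    intro e he b hb
    have hb' : Set.univ \ b ∈ B := hB.2.2.1 b hb
    have h := hmeas e he _ hb'
    rwa [show g e ⁻¹' (Set.univ \ b) = (g e ⁻¹' b)ᶜ by
      simp [Set.compl_eq_univ_diff]] at h
  -- the collections and their essential suprema
  set Ecoll : ℕ → Set (Set X) := fun n => (fun e => e ∩ g e ⁻¹' (cE n)) '' E with hEcoll
  have hEcollA : ∀ n, Ecoll n ⊆ A := by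
    rintro n s ⟨e, he, rfl⟩
    exact hmeas e he _ (hcEB n)
  choose S hS using fun n => hloc (Ecoll n) (hEcollA n)
  have hub : ∀ e ∈ E, ∀ n, (e ∩ g e ⁻¹' (cE n)) \ S n ∈ N := fun e he n =>
    (hS n).2.1 _ ⟨e, he, rfl⟩
  -- key claim: on e, a.e. point of S n satisfies g e x ∈ cE n
  have key : ∀ e ∈ E, ∀ n, S n ∩ e ∩ (g e ⁻¹' (cE n))ᶜ ∈ N := by
    intro e he n
    set U : Set X := (e ∩ (g e ⁻¹' (cE n))ᶜ)ᶜ with hU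
    have hUA : U ∈ A := sa_compl hA (hmeasC e he _ (hcEB n))
    have hUB : IsEssUB N (Ecoll n) U := by
      rintro s ⟨e', he', rfl⟩
      apply hsat _ _ _ (hcomp e he e' he')
      rintro x ⟨⟨hx1, hx2⟩, hx3⟩
      rw [hU, Set.mem_compl_iff, not_not] at hx3
      obtain ⟨hxe, hxg⟩ := hx3
      exact ⟨⟨hxe, hx1⟩, fun heq => hxg (show g e x ∈ cE n from heq ▸ hx2)⟩
    have hSn := (hS n).2.2 U hUA hUB
    apply hsat _ _ _ hSn
    rintro x ⟨⟨hxS, hxe⟩, hxg⟩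
    exact ⟨hxS, by rw [hU, Set.mem_compl_iff, not_not]; exact ⟨hxe, hxg⟩⟩
  -- the bad set of each e
  set Bad : Set X → Set X := fun e =>
    ⋃ n, ((e ∩ g e ⁻¹' (cE n)) \ S n) ∪ (S n ∩ e ∩ (g e ⁻¹' (cE n))ᶜ) with hBad
  have hBadN : ∀ e ∈ E, Bad e ∈ N := fun e he =>
    hN.2.2.2 _ fun n => si_union hN (hub e he n) (key e he n)
  -- definition of the gluing
  set P : X → Y → Prop := fun x y => ∀ n, (y ∈ cE n ↔ x ∈ S n) with hP
  have Puniq : ∀ x y y', P x y → P x y' → y = y' := by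
    intro x y y' hy hy'
    by_contra hne
    obtain ⟨c, hc, hxor⟩ := hsep y y' hne
    obtain ⟨n, rfl⟩ := hrange c hc
    have h1 : y ∈ cE n ↔ y' ∈ cE n := (hy n).trans (hy' n).symm
    rcases hxor with ⟨h, h'⟩ | ⟨h, h'⟩
    · exact h' (h1.mp h)
    · exact h' (h1.mpr h)
  set f : X → Y := fun x =>
    if h : ∃ y, P x y then h.choose else Classical.arbitrary Y with hf
  have hfP : ∀ x y, P x y → f x = y := by
    intro x y hy
    have h : ∃ y, P x y := ⟨y, hy⟩
    rw [hf]
    simp only [dif_pos h]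
    exact Puniq x _ _ h.choose_spec hy
  have hagree : ∀ e ∈ E, e ∩ {x | f x ≠ g e x} ⊆ Bad e := by
    rintro e he x ⟨hxe, hxne⟩
    by_contra hxb
    apply hxne
    apply hfP
    intro n
    rw [hBad, Set.mem_iUnion] at hxb
    push_neg at hxb
    have h := hxb n
    rw [Set.mem_union] at h
    push_neg at h
    constructor
    · intro hgc
      by_contra hxS
      exact h.1 ⟨⟨hxe, hgc⟩, hxS⟩
    · intro hxS
      by_contra hgc
      exact h.2 ⟨⟨hxS, hxe⟩, hgc⟩
  have hglue2 : ∀ e ∈ E, e ∩ {x | f x ≠ g e x} ∈ N := fun e he =>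
    hsat _ _ (hagree e he) (hBadN e he)
  -- measurability of f, via local determination
  have hfmeas : ∀ b ∈ B, f ⁻¹' b ∈ A := by
    intro b hb
    apply hld E hEA hgen _ (Set.subset_univ _)
    intro e he
    have hD : e ∩ {x | f x ≠ g e x} ∈ N := hglue2 e he
    set D := e ∩ {x | f x ≠ g e x} with hDdef
    have heq : f ⁻¹' b ∩ e = ((e ∩ g e ⁻¹' b) \ D) ∪ (f ⁻¹' b ∩ D) := by
      ext x
      constructor
      · rintro ⟨hxb, hxe⟩
        by_cases hxd : x ∈ D
        · exact Or.inr ⟨hxb, hxd⟩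
        · refine Or.inl ⟨⟨hxe, ?_⟩, hxd⟩
          have hfx : f x = g e x := by
            by_contra h
            exact hxd ⟨hxe, h⟩
          rwa [Set.mem_preimage, ← hfx]
      · rintro (⟨⟨hxe, hxg⟩, hxd⟩ | ⟨hxb, hxd⟩)
        · refine ⟨?_, hxe⟩
          have hfx : f x = g e x := by
            by_contra h
            exact hxd ⟨hxe, h⟩
          rw [Set.mem_preimage, hfx]
          exact hxg
        · exact ⟨hxb, hxd.1⟩
    rw [heq]
    exact sa_union hA (sa_diff hA (hmeas e he b hb) (hN.1 hD))
      (hN.1 (hsat _ _ Set.inter_subset_right hD))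
  refine ⟨⟨f, hfmeas, hglue2⟩, ?_⟩
  -- uniqueness
  intro f1 f2 h1 h2
  set s := {x | f1 x ≠ f2 x} with hs
  have hseq : s = ⋃ n, (f1 ⁻¹' (cE n) \ f2 ⁻¹' (cE n)) ∪ (f2 ⁻¹' (cE n) \ f1 ⁻¹' (cE n)) := by
    ext x
    simp only [hs, Set.mem_setOf_eq, Set.mem_iUnion, Set.mem_union, Set.mem_diff,
      Set.mem_preimage]
    constructor
    · intro hne
      obtain ⟨c, hc, hxor⟩ := hsep _ _ hne
      obtain ⟨n, rfl⟩ := hrange c hc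
      rcases hxor with ⟨h, h'⟩ | ⟨h, h'⟩
      · exact ⟨n, Or.inl ⟨h, h'⟩⟩
      · exact ⟨n, Or.inr ⟨h, h'⟩⟩
    · rintro ⟨n, (⟨h, h'⟩ | ⟨h, h'⟩)⟩ <;> intro heq
      · exact h' (heq ▸ h)
      · exact h' (heq ▸ h)
  have hsA : s ∈ A := by
    rw [hseq]
    exact hA.2.2.2 _ fun n =>
      sa_union hA (sa_diff hA (h1.1 _ (hcEB n)) (h2.1 _ (hcEB n)))
        (sa_diff hA (h2.1 _ (hcEB n)) (h1.1 _ (hcEB n)))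
  have hUB : IsEssUB N E sᶜ := by
    intro e he
    apply hN.2.2.1 _ (sa_diff hA (hEA he) (sa_compl hA hsA)) _
      (si_union hN (h1.2 e he) (h2.2 e he))
    rintro x ⟨hxe, hxs⟩
    rw [Set.mem_compl_iff, not_not, hs, Set.mem_setOf_eq] at hxs
    by_cases h : f1 x = g e x
    · exact Or.inr ⟨hxe, fun h2x => hxs (h.trans h2x.symm)⟩
    · exact Or.inl ⟨hxe, h⟩
  have hfin := hgen.2.2 sᶜ (sa_compl hA hsA) hUB
  rw [hs] at hfin ⊢
  simpa using hfin

end MSNPaper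
end

section
/- Let (X, 𝒜, μ) be a complete semi-finite measure space and ℰ ⊆ 𝒜 ∖ 𝒩_μ an almost disjointed 𝒩_μ-generating family with μ(Z) < ∞ for every Z ∈ ℰ. Then for every A ∈ 𝒜 one has μ(A) = ∑_{Z∈ℰ} μ(A ∩ Z), the sum in [0, ∞] of the (possibly uncountable) family ⟨μ(A ∩ Z)⟩_{Z∈ℰ}. -/
open Set MeasureTheory ENNReal

namespace MSNPaper

variable {X Y : Type*}

/-!
Almost disjointness makes the traces `A ∩ Z` almost disjoint, so their measures add up to at most
`μ A`. Conversely, if the sum is finite, only countably many traces are non-null; the union `S` of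
the corresponding members of `E` is measurable, and `A \ S` meets every member of `E` in a null set.
Then `(A \ S)ᶜ` is an essential upper bound of `E`, so, `X` being the essential supremum of `E`,
`A \ S` is null and `μ A ≤ μ (A ∩ S) ≤ ∑ μ (A ∩ Z)`.
-/

section

variable {ι : Type*} [MeasurableSpace X]

def nullSets (μ : Measure X) : Set (Set X) :=
  {s | MeasurableSet s ∧ μ s = 0}

theorem tsum_measure_inter_le (μ : Measure X)
    {s : ι → Set X} (hs : ∀ i, MeasurableSet (s i))
    (hdisj : Pairwise fun i j => μ (s i ∩ s j) = 0) (A : Set X) :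
    ∑' i, μ (A ∩ s i) ≤ μ A :=
  calc ∑' i, μ (A ∩ s i) = ∑' i, μ.restrict A (s i) := by
        simp_rw [Measure.restrict_apply (hs _), inter_comm]
    _ ≤ μ.restrict A (⋃ i, s i) :=
        tsum_meas_le_meas_iUnion_of_disjoint₀ _ (fun i => (hs i).nullMeasurableSet)
          fun _ _ hij =>
            nonpos_iff_eq_zero.1 ((Measure.restrict_apply_le _ _).trans_eq (hdisj hij))
    _ ≤ μ A := by simpa using measure_mono (μ := μ.restrict A) (subset_univ (⋃ i, s i))

theorem measure_le_tsum_measure_inter (μ : Measure X)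
    {s : ι → Set X} (hs : ∀ i, MeasurableSet (s i))
    (hnull : ∀ B, MeasurableSet B → (∀ i, μ (B ∩ s i) = 0) → μ B = 0)
    {A : Set X} (hA : MeasurableSet A) :
    μ A ≤ ∑' i, μ (A ∩ s i) := by
  rcases eq_or_ne (∑' i, μ (A ∩ s i)) ⊤ with htop | htop
  · exact htop ▸ le_top
  set T := Function.support fun i => μ (A ∩ s i)
  have hT : T.Countable := Summable.countable_support_ennreal htop
  set S := ⋃ i ∈ T, s i
  have hAS : μ (A \ S) = 0 := by
    refine hnull _ (hA.diff (.biUnion hT fun i _ => hs i)) fun i => ?_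
    by_cases hi : i ∈ T
    · exact measure_mono_null (fun x hx => (hx.1.2 (mem_biUnion hi hx.2)).elim) measure_empty
    · exact measure_mono_null (inter_subset_inter_left _ sdiff_subset)
        (Function.notMem_support.1 hi)
  calc μ A ≤ μ (A ∩ S) + μ (A \ S) := measure_le_inter_add_sdiff μ A S
    _ = μ (⋃ i ∈ T, A ∩ s i) := by rw [hAS, add_zero, inter_iUnion₂]
    _ ≤ ∑' i : T, μ (A ∩ s i) := measure_biUnion_le μ hT _
    _ ≤ ∑' i, μ (A ∩ s i) := ENNReal.tsum_comp_le_tsum_of_injective Subtype.val_injective _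

theorem measure_eq_zero_of_isEssSup_univ {μ : Measure X}
    {E : Set (Set X)} (hEA : ∀ Z ∈ E, MeasurableSet Z)
    (hgen : IsEssSup {s | MeasurableSet s} (nullSets μ) E univ)
    {B : Set X} (hB : MeasurableSet B) (hnull : ∀ Z ∈ E, μ (B ∩ Z) = 0) : μ B = 0 := by
  have hUB : IsEssUB (nullSets μ) E Bᶜ := fun Z hZ => by
    rw [sdiff_compl, inter_comm]
    exact ⟨hB.inter (hEA Z hZ), hnull Z hZ⟩
  simpa using (hgen.2.2 Bᶜ hB.compl hUB).2

end

theorem measure_eq_tsum_general {X : Type*} [MeasurableSpace X] (μ : Measure X)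
    (E : Set (Set X)) (hEA : ∀ Z ∈ E, MeasurableSet Z)
    (hdisj : AlmostDisjointed {s : Set X | MeasurableSet s ∧ μ s = 0} E)
    (hgen : IsEssSup {s : Set X | MeasurableSet s}
      {s : Set X | MeasurableSet s ∧ μ s = 0} E Set.univ)
    (A : Set X) (hA : MeasurableSet A) :
    μ A = ∑' Z : ↥E, μ (A ∩ ↑Z) :=
  le_antisymm
    (measure_le_tsum_measure_inter μ (fun Z : E => hEA Z Z.2)
      (fun _ hB hnull => measure_eq_zero_of_isEssSup_univ hEA hgen hB fun Z hZ => hnull ⟨Z, hZ⟩)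
      hA)
    (tsum_measure_inter_le μ (fun Z : E => hEA Z Z.2)
      (fun Z Z' hne => (hdisj Z.2 Z'.2 (Subtype.coe_injective.ne hne)).2) A)

/-- If `E` is an almost disjointed generating family of sets of finite measure in a
complete semi-finite measure space, then the measure of every measurable set is the
sum of the measures of its traces on members of `E`. -/
theorem measure_eq_tsum {X : Type*} [MeasurableSpace X] (μ : Measure X)
    (hcomplete : ∀ s t : Set X, s ⊆ t → MeasurableSet t → μ t = 0 → MeasurableSet s)
    (hsemifinite : ∀ s : Set X, MeasurableSet s → μ s = ⊤ →
      ∃ t, t ⊆ s ∧ MeasurableSet t ∧ 0 < μ t ∧ μ t < ⊤)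
    (E : Set (Set X)) (hEA : ∀ Z ∈ E, MeasurableSet Z)
    (hEN : ∀ Z ∈ E, μ Z ≠ 0) (hEfin : ∀ Z ∈ E, μ Z < ⊤)
    (hdisj : AlmostDisjointed {s : Set X | MeasurableSet s ∧ μ s = 0} E)
    (hgen : IsEssSup {s : Set X | MeasurableSet s}
      {s : Set X | MeasurableSet s ∧ μ s = 0} E Set.univ)
    (A : Set X) (hA : MeasurableSet A) :
    μ A = ∑' Z : ↥E, μ (A ∩ ↑Z) :=
  measure_eq_tsum_general μ E hEA hdisj hgen A hA

end MSNPaper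
end

section
/- Let (X, 𝒜, μ) be a complete semi-finite measure space and ℰ ⊆ 𝒜 ∖ 𝒩_μ an almost disjointed 𝒩_μ-generating family with μ(Z) < ∞ for every Z ∈ ℰ. Let (X̂, 𝒜̂, μ̂) and p : X̂ → X be as in the construction of the strictly localizable version: X̂ = {(Z, x) : Z ∈ ℰ, x ∈ Z}, p(Z, x) = x, 𝒜̂ = {Â ⊆ X̂ : {x ∈ Z : (Z, x) ∈ Â} ∈ 𝒜 for every Z ∈ ℰ}, and μ̂(Â) = ∑_{Z∈ℰ} μ({x ∈ Z : (Z, x) ∈ Â}). Then the map sending the class of an integrable function f to the class of f ∘ p is a surjective linear isometry (an isometric isomorphism of Banach spaces) from L¹(X, 𝒜, μ) onto L¹(X̂, 𝒜̂, μ̂). -/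
open Set MeasureTheory ENNReal

namespace MSNPaper

variable {X Y : Type*}

/-- The underlying set of the coproduct `⨿_{Z ∈ E} Z`, realised as the set of pairs
`(Z, x)` with `Z ∈ E` and `x ∈ Z`. -/
def hatCarrier {X : Type*} (E : Set (Set X)) : Set (Set X × X) :=
  {q | q.1 ∈ E ∧ q.2 ∈ q.1}

/-- The trace `{x ∈ Z : (Z, x) ∈ s}` of a subset `s` of `X̂ = ⨿_{Z ∈ E} Z` on the
copy of `Z ∈ E`. -/
def hatTrace {X : Type*} (E : Set (Set X)) (Z : Set X) (s : Set ↥(hatCarrier E)) :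
    Set X :=
  {x | ((Z, x) : Set X × X) ∈ Subtype.val '' s}

/-- The coproduct σ-algebra on `X̂ = ⨿_{Z ∈ E} Z`: a set is measurable iff each of its
traces is the trace on `Z` of a measurable subset of `X`. -/
def hatMS {X : Type*} [MeasurableSpace X] (E : Set (Set X)) :
    MeasurableSpace ↥(hatCarrier E) where
  MeasurableSet' s := ∀ Z ∈ E, ∃ a : Set X, MeasurableSet a ∧ hatTrace E Z s = a ∩ Z
  measurableSet_empty := fun Z _ => ⟨∅, MeasurableSet.empty, by simp [hatTrace]⟩
  measurableSet_compl := by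
    intro s hs Z hZ
    obtain ⟨a, ha, hta⟩ := hs Z hZ
    refine ⟨aᶜ, ha.compl, ?_⟩
    ext x
    constructor
    · rintro ⟨q, hq, hqe⟩
      have hmem : (Z, x) ∈ hatCarrier E := by rw [← hqe]; exact q.2
      refine ⟨fun hxa : x ∈ a => hq ?_, hmem.2⟩
      have : x ∈ hatTrace E Z s := by rw [hta]; exact ⟨hxa, hmem.2⟩
      obtain ⟨q', hq', hq'e⟩ := this
      have : q' = q := Subtype.val_injective (hq'e.trans hqe.symm)
      rwa [← this]
    · rintro ⟨hxa, hxZ⟩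
      refine ⟨⟨(Z, x), ⟨hZ, hxZ⟩⟩, fun hmem => hxa ?_, rfl⟩
      have : x ∈ hatTrace E Z s := ⟨_, hmem, rfl⟩
      rw [hta] at this
      exact this.1
  measurableSet_iUnion := by
    intro f hf Z hZ
    choose a ha hta using fun n => hf n Z hZ
    refine ⟨⋃ n, a n, MeasurableSet.iUnion ha, ?_⟩
    have : hatTrace E Z (⋃ n, f n) = ⋃ n, hatTrace E Z (f n) := by
      ext x
      simp only [hatTrace, Set.image_iUnion, Set.mem_iUnion, Set.mem_setOf_eq]
    rw [this, Set.iUnion_congr hta, Set.iUnion_inter]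

open scoped symmDiff

/-!
The projection `p : X̂ → X` is measure preserving: for measurable `A`, almost disjointness gives
`∑_Z μ (A ∩ Z) ≤ μ A`, and since only countably many `Z` meet `A` non-negligibly, the
generating property shows that `A` is covered up to a null set by those `Z`. Hence
`f ↦ f ∘ p` is a linear isometry of `L¹` spaces, and its range is closed. A set `Ŝ` of finite
`μ̂`-measure also has only countably many non-negligible traces `a_Z ∩ Z`, and almost disjointness
makes `Ŝ` a.e. equal to `p⁻¹ (⋃_Z a_Z ∩ Z)`; so all integrable indicators lie in the range.
-/

theorem _root_.MeasureTheory.indicatorConstLp_congr_ae {α F : Type*} [MeasurableSpace α]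
    [NormedAddCommGroup F] {p : ℝ≥0∞} {μ : Measure α} {s t : Set α} (hs : MeasurableSet s)
    (ht : MeasurableSet t) (hμs : μ s ≠ ∞) (hμt : μ t ≠ ∞) (hst : s =ᵐ[μ] t) (c : F) :
    indicatorConstLp p hs hμs c = indicatorConstLp p ht hμt c :=
  Lp.ext <| indicatorConstLp_coeFn.trans <|
    (indicator_ae_eq_of_ae_eq_set hst).trans indicatorConstLp_coeFn.symm

theorem _root_.MeasureTheory.Lp.compMeasurePreserving_surjective {α β F : Type*}
    [MeasurableSpace α] [MeasurableSpace β] [NormedAddCommGroup F] [CompleteSpace F]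
    {p : ℝ≥0∞} [Fact (1 ≤ p)] (hp : p ≠ ∞) {μa : Measure α} {μb : Measure β} {f : α → β}
    (hf : MeasurePreserving f μa μb)
    (h : ∀ s, MeasurableSet s → μa s < ∞ → ∃ t, MeasurableSet t ∧ f ⁻¹' t =ᵐ[μa] s) :
    Function.Surjective (Lp.compMeasurePreserving (E := F) (p := p) f hf) := by
  intro g
  refine Lp.induction hp (· ∈ Set.range (Lp.compMeasurePreserving f hf)) ?_ ?_ ?_ g
  · intro c s hs hμs
    obtain ⟨t, ht, hts⟩ := h s hs hμs
    have hμt : μb t ≠ ∞ := by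
      rw [← hf.measure_preimage ht.nullMeasurableSet, measure_congr hts]
      exact hμs.ne
    refine ⟨indicatorConstLp p ht hμt c, ?_⟩
    rw [Lp.indicatorConstLp_compMeasurePreserving, Lp.simpleFunc.coe_indicatorConst]
    exact indicatorConstLp_congr_ae _ _ _ _ hts c
  · rintro _ _ _ _ _ ⟨g₁, hg₁⟩ ⟨g₂, hg₂⟩
    exact ⟨g₁ + g₂, by rw [map_add, hg₁, hg₂]⟩
  · exact (Lp.isometry_compMeasurePreserving hf).isClosedEmbedding.isClosed_range

section Coproduct

variable {E : Set (Set X)}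

def hatProj (E : Set (Set X)) (q : hatCarrier E) : X := q.1.2

theorem hatTrace_preimage_hatProj (a : Set X) {Z : Set X} (hZ : Z ∈ E) :
    hatTrace E Z (hatProj E ⁻¹' a) = a ∩ Z := by
  ext x
  constructor
  · rintro ⟨q, hq, hqx⟩
    have hmem := q.2
    rw [hqx] at hmem
    exact ⟨by simpa only [mem_preimage, hatProj, hqx] using hq, hmem.2⟩
  · rintro ⟨hxa, hxZ⟩
    exact ⟨⟨(Z, x), hZ, hxZ⟩, hxa, rfl⟩

theorem hatTrace_symmDiff (Z : Set X) (s t : Set (hatCarrier E)) :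
    hatTrace E Z (s ∆ t) = hatTrace E Z s ∆ hatTrace E Z t := by
  ext x
  simp [hatTrace, Set.image_symmDiff Subtype.val_injective, Set.mem_symmDiff]

variable [MeasurableSpace X] {μ : Measure X}

attribute [local instance] hatMS

theorem measurable_hatProj : Measurable (hatProj E) :=
  fun a ha _ hZ => ⟨a, ha, hatTrace_preimage_hatProj a hZ⟩

theorem measure_eq_zero_of_forall_inter_eq_zero (hEA : ∀ Z ∈ E, MeasurableSet Z)
    (hgen : IsEssSup {s : Set X | MeasurableSet s}
      {s : Set X | MeasurableSet s ∧ μ s = 0} E Set.univ)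
    {a : Set X} (ha : MeasurableSet a) (h : ∀ Z ∈ E, μ (a ∩ Z) = 0) : μ a = 0 := by
  have hub : IsEssUB {s : Set X | MeasurableSet s ∧ μ s = 0} E aᶜ := fun Z hZ =>
    ⟨(hEA Z hZ).diff ha.compl, by rw [sdiff_compl, inter_comm]; exact h Z hZ⟩
  simpa using (hgen.2.2 aᶜ ha.compl hub).2

theorem measure_biUnion_inter_eq_zero
    (hdisj : AlmostDisjointed {s : Set X | MeasurableSet s ∧ μ s = 0} E)
    {S : Set E} (hS : S.Countable) {Z : E} (hZS : Z ∉ S) :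
    μ ((⋃ W ∈ S, (W : Set X)) ∩ Z) = 0 := by
  rw [iUnion₂_inter, measure_biUnion_null_iff hS]
  exact fun W hW => (hdisj W.2 Z.2 (Subtype.coe_ne_coe.2 (ne_of_mem_of_not_mem hW hZS))).2

theorem tsum_measure_inter_eq (hEA : ∀ Z ∈ E, MeasurableSet Z)
    (hdisj : AlmostDisjointed {s : Set X | MeasurableSet s ∧ μ s = 0} E)
    (hgen : IsEssSup {s : Set X | MeasurableSet s}
      {s : Set X | MeasurableSet s ∧ μ s = 0} E Set.univ)
    {a : Set X} (ha : MeasurableSet a) :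
    ∑' Z : E, μ (a ∩ Z) = μ a := by
  refine le_antisymm ?_ ?_
  · calc ∑' Z : E, μ (a ∩ Z) ≤ μ (⋃ Z : E, a ∩ Z) :=
          tsum_meas_le_meas_iUnion_of_disjoint₀ μ
            (fun Z => (ha.inter (hEA Z Z.2)).nullMeasurableSet) fun Z W hZW =>
              measure_mono_null (inter_subset_inter inter_subset_right inter_subset_right)
                (hdisj Z.2 W.2 (Subtype.coe_ne_coe.2 hZW)).2
      _ ≤ μ a := measure_mono (iUnion_subset fun _ => inter_subset_left)
  by_cases htop : ∑' Z : E, μ (a ∩ Z) = ∞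
  · exact htop ▸ le_top
  set S := Function.support fun Z : E => μ (a ∩ Z)
  have hS : S.Countable := Summable.countable_support_ennreal htop
  set U := ⋃ Z ∈ S, (Z : Set X)
  have hnull : μ (a \ U) = 0 := by
    refine measure_eq_zero_of_forall_inter_eq_zero hEA hgen
      (ha.diff (.biUnion hS fun Z _ => hEA Z Z.2)) fun Z hZ => ?_
    by_cases hZS : ⟨Z, hZ⟩ ∈ S
    · exact measure_mono_null (fun x hx => (hx.1.2 (mem_biUnion hZS hx.2)).elim) measure_empty
    · exact measure_mono_null (inter_subset_inter_left _ sdiff_subset)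
        (Function.notMem_support.1 hZS)
  calc μ a ≤ μ (a ∩ U) + μ (a \ U) := measure_le_inter_add_sdiff μ a U
    _ = μ (⋃ Z ∈ S, a ∩ Z) := by rw [hnull, add_zero, inter_iUnion₂]
    _ ≤ ∑' Z : S, μ (a ∩ Z) := measure_biUnion_le μ hS _
    _ ≤ ∑' Z : E, μ (a ∩ Z) :=
        ENNReal.tsum_comp_le_tsum_of_injective Subtype.val_injective (fun Z : E => μ (a ∩ Z))

theorem measurePreserving_hatProj (hEA : ∀ Z ∈ E, MeasurableSet Z)
    (hdisj : AlmostDisjointed {s : Set X | MeasurableSet s ∧ μ s = 0} E)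
    (hgen : IsEssSup {s : Set X | MeasurableSet s}
      {s : Set X | MeasurableSet s ∧ μ s = 0} E Set.univ)
    {μhat : Measure (hatCarrier E)}
    (hμhat : ∀ s : Set (hatCarrier E), MeasurableSet s →
      μhat s = ∑' Z : E, μ (hatTrace E Z s)) :
    MeasurePreserving (hatProj E) μhat μ := by
  refine ⟨measurable_hatProj, Measure.ext fun a ha => ?_⟩
  rw [Measure.map_apply measurable_hatProj ha, hμhat _ (measurable_hatProj ha)]
  simp_rw [fun Z : E => hatTrace_preimage_hatProj a Z.2]
  exact tsum_measure_inter_eq hEA hdisj hgen ha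

theorem exists_hatProj_preimage_ae_eq (hEA : ∀ Z ∈ E, MeasurableSet Z)
    (hdisj : AlmostDisjointed {s : Set X | MeasurableSet s ∧ μ s = 0} E)
    {μhat : Measure (hatCarrier E)}
    (hμhat : ∀ s : Set (hatCarrier E), MeasurableSet s →
      μhat s = ∑' Z : E, μ (hatTrace E Z s))
    {s : Set (hatCarrier E)} (hs : MeasurableSet s) (hμs : μhat s ≠ ∞) :
    ∃ t, MeasurableSet t ∧ hatProj E ⁻¹' t =ᵐ[μhat] s := by
  choose a ha hta using fun Z : E => hs Z Z.2
  set S := Function.support fun Z : E => μ (hatTrace E Z s)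
  have hS : S.Countable := Summable.countable_support_ennreal (hμhat s hs ▸ hμs)
  have ht : MeasurableSet (⋃ W ∈ S, a W ∩ W) :=
    MeasurableSet.biUnion hS fun W _ => (ha W).inter (hEA W W.2)
  refine ⟨_, ht, ?_⟩
  rw [← measure_symmDiff_eq_zero_iff, hμhat _ ((measurable_hatProj ht).symmDiff hs),
    ENNReal.tsum_eq_zero]
  intro Z
  rw [hatTrace_symmDiff, hatTrace_preimage_hatProj _ Z.2, hta, measure_symmDiff_eq_zero_iff,
    ae_eq_set]
  constructor
  · refine measure_mono_null ?_ (measure_biUnion_inter_eq_zero hdisj (hS.mono sdiff_subset)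
      (fun h => h.2 rfl : Z ∉ S \ {Z}))
    rintro x ⟨⟨hx, hxZ⟩, hxaZ⟩
    obtain ⟨W, hWS, hxa, hxW⟩ := mem_iUnion₂.1 hx
    refine ⟨mem_biUnion ⟨hWS, ?_⟩ hxW, hxZ⟩
    rintro (rfl : W = Z)
    exact hxaZ ⟨hxa, hxZ⟩
  · by_cases hZS : Z ∈ S
    · exact measure_mono_null (fun x hx => (hx.2 ⟨mem_biUnion hZS hx.1, hx.1.2⟩).elim)
        measure_empty
    · have h0 := Function.notMem_support.1 hZS
      rw [hta] at h0
      exact measure_mono_null sdiff_subset h0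

end Coproduct

theorem strictlyLocalizableVersion_L1_general {X : Type*} [MeasurableSpace X] (μ : Measure X)
    (E : Set (Set X)) (hEA : ∀ Z ∈ E, MeasurableSet Z)
    (hdisj : AlmostDisjointed {s : Set X | MeasurableSet s ∧ μ s = 0} E)
    (hgen : IsEssSup {s : Set X | MeasurableSet s}
      {s : Set X | MeasurableSet s ∧ μ s = 0} E Set.univ) :
    letI : MeasurableSpace ↥(hatCarrier E) := hatMS E
    ∀ μhat : Measure ↥(hatCarrier E),
      (∀ s : Set ↥(hatCarrier E), MeasurableSet s →
        μhat s = ∑' Z : ↥E, μ (hatTrace E (↑Z) s)) →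
      ∃ T : Lp ℝ 1 μ →ₗᵢ[ℝ] Lp ℝ 1 μhat,
        Function.Surjective T ∧
          ∀ f : Lp ℝ 1 μ,
            (T f : ↥(hatCarrier E) → ℝ) =ᵐ[μhat] fun z => (f : X → ℝ) z.1.2 := by
  intro μhat hμhat
  -- the statement's `letI` is inlined; without this, instance search finds the subtype σ-algebra
  let _ := hatMS E
  have hp := measurePreserving_hatProj hEA hdisj hgen hμhat
  refine ⟨Lp.compMeasurePreservingₗᵢ ℝ (hatProj E) hp, ?_,
    fun f => Lp.coeFn_compMeasurePreserving f hp⟩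
  exact Lp.compMeasurePreserving_surjective one_ne_top hp fun s hs hμs =>
    exists_hatProj_preimage_ae_eq hEA hdisj hμhat hs hμs.ne

/-- Strictly localizable version: if `E` is an almost disjointed generating family of
sets of finite nonzero measure in a complete semi-finite measure space `(X, 𝒜, μ)`,
and `μ̂` is the measure on `X̂ = ⨿_{Z ∈ E} Z` given by `μ̂(Â) = ∑_{Z ∈ E} μ {x ∈ Z :
(Z, x) ∈ Â}`, then composition with the projection `p (Z, x) = x` induces an
isometric isomorphism (a surjective linear isometry) `L¹(X, 𝒜, μ) ≃ L¹(X̂, 𝒜̂, μ̂)`. -/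
theorem strictlyLocalizableVersion_L1 {X : Type*} [MeasurableSpace X] (μ : Measure X)
    (hcomplete : ∀ s t : Set X, s ⊆ t → MeasurableSet t → μ t = 0 → MeasurableSet s)
    (hsemifinite : ∀ s : Set X, MeasurableSet s → μ s = ⊤ →
      ∃ t, t ⊆ s ∧ MeasurableSet t ∧ 0 < μ t ∧ μ t < ⊤)
    (E : Set (Set X)) (hEA : ∀ Z ∈ E, MeasurableSet Z)
    (hEN : ∀ Z ∈ E, μ Z ≠ 0) (hEfin : ∀ Z ∈ E, μ Z < ⊤)
    (hdisj : AlmostDisjointed {s : Set X | MeasurableSet s ∧ μ s = 0} E)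
    (hgen : IsEssSup {s : Set X | MeasurableSet s}
      {s : Set X | MeasurableSet s ∧ μ s = 0} E Set.univ) :
    letI : MeasurableSpace ↥(hatCarrier E) := hatMS E
    ∀ μhat : Measure ↥(hatCarrier E),
      (∀ s : Set ↥(hatCarrier E), MeasurableSet s →
        μhat s = ∑' Z : ↥E, μ (hatTrace E (↑Z) s)) →
      ∃ T : Lp ℝ 1 μ →ₗᵢ[ℝ] Lp ℝ 1 μhat,
        Function.Surjective T ∧
          ∀ f : Lp ℝ 1 μ,
            (T f : ↥(hatCarrier E) → ℝ) =ᵐ[μhat] fun z => (f : X → ℝ) z.1.2 :=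
  strictlyLocalizableVersion_L1_general μ E hEA hdisj hgen

end MSNPaper
end
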